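/- arXiv:2409.18767 — 8 statements merged into one kernel-verified Lean document; each statement's English description precedes it below -/
import Mathlib

section
/- With the subdivision setup below, the average over all σ ∈ S = (S_n)^{e'} of the squared radius of gyration of the full embedding X^σ (the point cloud of all v = v' + (n−1)e' vertex positions with unit weights) satisfies (1/#S) Σ_{σ∈S} Rg²(X^σ) = Rg²(X', deg + 2/(n−1)) + ((n+1)(2v−n)/(12 v²))·‖W‖² − ((n+1)(2v−1)/(12 v²))·‖W'‖², where Rg²(X', deg + 2/(n−1)) is the weighted squared radius of gyration of X' with the weight of junction vertex k equal to deg(k) + 2/(n−1), ‖W‖² = Σ_{i=1}^{e'} Σ_{j=1}^{n} ‖w(i,j)‖², and ‖W'‖² = Σ_{i=1}^{e'} ‖w'_i‖². -/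
/-!
Writing `Rg²` as the mean squared norm minus the squared norm of the mean position, the average
over `σ` splits into two averages. The edges are permuted independently, so the first is a sum of
per-edge averages, and the averaged squared norm of the total position is the squared norm of its
mean plus the sum of the per-edge variances. For a uniformly random permutation `π` of `Fin n`,
`𝔼 ⟪w (π k), w (π l)⟫` is `Σ ‖w‖² / n` if `k = l` and `(‖Σ w‖² - Σ ‖w‖²) / (n (n - 1))` otherwise;
since the interior points of an edge are linear in `w ∘ π`, this evaluates every per-edge average.
The interior points of an edge sum on average to `(n - 1) / 2 • (head + tail)`, which is why the
junction weights `deg + 2 / (n - 1)` reproduce the mean position.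
-/

open Finset

/-- Center of mass of a weighted point cloud. -/
noncomputable def com {V : Type*} [Fintype V] {d : ℕ}
    (X : V → EuclideanSpace ℝ (Fin d)) (Ω : V → ℝ) : EuclideanSpace ℝ (Fin d) :=
  (∑ v, Ω v)⁻¹ • ∑ v, Ω v • X v

/-- Weighted squared radius of gyration of a point cloud. -/
noncomputable def rg2 {V : Type*} [Fintype V] {d : ℕ}
    (X : V → EuclideanSpace ℝ (Fin d)) (Ω : V → ℝ) : ℝ :=
  (∑ v, Ω v)⁻¹ * ∑ v, Ω v * ‖X v - com X Ω‖ ^ 2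

/-- Center of mass with unit weights. -/
noncomputable def uMu {V : Type*} [Fintype V] {d : ℕ}
    (X : V → EuclideanSpace ℝ (Fin d)) : EuclideanSpace ℝ (Fin d) :=
  (Fintype.card V : ℝ)⁻¹ • ∑ v, X v

/-- Squared radius of gyration with unit weights. -/
noncomputable def uRg2 {V : Type*} [Fintype V] {d : ℕ}
    (X : V → EuclideanSpace ℝ (Fin d)) : ℝ :=
  (Fintype.card V : ℝ)⁻¹ * ∑ v, ‖X v - uMu X‖ ^ 2

/-- Position of the `j`-th intermediate vertex (1-indexed position `j+1`) on the
subdivided edge `i`, for the permuted displacement vectors: `x^σ_{i,j}` equals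
`X'(tail i)` plus the first `j+1` permuted displacements. -/
noncomputable def xpos {d n v' e' : ℕ}
    (X' : Fin v' → EuclideanSpace ℝ (Fin d)) (tl : Fin e' → Fin v')
    (w : Fin e' → Fin n → EuclideanSpace ℝ (Fin d))
    (σ : Fin e' → Equiv.Perm (Fin n)) (i : Fin e') (j : Fin (n - 1)) :
    EuclideanSpace ℝ (Fin d) :=
  X' (tl i) + ∑ k : Fin n, if (k : ℕ) ≤ (j : ℕ) then w i (σ i k) else 0

open Equiv Nat
open scoped InnerProductSpace

theorem inv_smul_eq_inv_smul_of_nsmul_eq {M : Type*} [AddCommGroup M] [Module ℝ M] {p q : ℕ}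
    (hp : p ≠ 0) (hq : q ≠ 0) {x y : M} (h : p • x = q • y) :
    (q : ℝ)⁻¹ • x = (p : ℝ)⁻¹ • y := by
  rw [← Nat.cast_smul_eq_nsmul ℝ, ← Nat.cast_smul_eq_nsmul ℝ] at h
  rw [inv_smul_eq_iff₀ (by positivity), smul_comm, eq_inv_smul_iff₀ (by positivity), h]

section PermutationSums

variable {α M : Type*} [Fintype α] [DecidableEq α] [AddCommMonoid M]

theorem card_nsmul_sum_perm_apply (a : α) (F : α → M) :
    Fintype.card α • ∑ π : Perm α, F (π a) = (Fintype.card α)! • ∑ x, F x := by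
  have hconst : ∀ b, ∑ π : Perm α, F (π b) = ∑ π : Perm α, F (π a) := fun b =>
    Fintype.sum_equiv (Equiv.mulRight (swap a b)) _ _ fun π => by simp
  calc Fintype.card α • ∑ π : Perm α, F (π a) = ∑ b, ∑ π : Perm α, F (π b) := by
        simp [hconst]
    _ = ∑ π : Perm α, ∑ b, F (π b) := Finset.sum_comm
    _ = (Fintype.card α)! • ∑ x, F x := by simp [Equiv.sum_comp, Fintype.card_perm]

theorem sum_perm_apply_apply_eq {a b a' b' : α} (hab : a ≠ b) (hab' : a' ≠ b')
    (F : α → α → M) :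
    ∑ π : Perm α, F (π a') (π b') = ∑ π : Perm α, F (π a) (π b) := by
  obtain ⟨τ, hτ⟩ := Perm.exists_extending_pair _ _ (Function.Embedding.embFinTwo hab).injective
    (Function.Embedding.embFinTwo hab').injective
  have ha : τ a = a' := hτ 0
  have hb : τ b = b' := hτ 1
  exact Fintype.sum_equiv (Equiv.mulRight τ) _ _ fun π => by simp [ha, hb]

theorem card_mul_pred_nsmul_sum_perm_apply_apply {a b : α} (hab : a ≠ b) (F : α → α → M) :
    (Fintype.card α * (Fintype.card α - 1)) • ∑ π : Perm α, F (π a) (π b)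
      = (Fintype.card α)! • ∑ k, ∑ l ∈ univ.erase k, F k l := by
  have herase : ∀ (π : Perm α) k, ∑ l ∈ univ.erase k, F (π k) (π l)
      = ∑ l ∈ univ.erase (π k), F (π k) l := fun π k =>
    Finset.sum_equiv π (by simp) (by simp)
  calc (Fintype.card α * (Fintype.card α - 1)) • ∑ π : Perm α, F (π a) (π b)
      = ∑ k, ∑ l ∈ univ.erase k, ∑ π : Perm α, F (π k) (π l) := by
        rw [Finset.sum_congr rfl fun k _ => Finset.sum_congr rfl fun l hl =>
          sum_perm_apply_apply_eq hab (Finset.ne_of_mem_erase hl).symm F]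
        simp [Finset.card_erase_of_mem, mul_nsmul']
    _ = ∑ π : Perm α, ∑ k, ∑ l ∈ univ.erase k, F (π k) (π l) := by
        rw [Finset.sum_comm]; simp_rw [Finset.sum_comm (s := univ.erase _)]
    _ = (Fintype.card α)! • ∑ k, ∑ l ∈ univ.erase k, F k l := by
        simp [herase, Equiv.sum_comp _ (fun k => ∑ l ∈ univ.erase k, F k l), Fintype.card_perm]

end PermutationSums

section PermutationAverages

variable {α M : Type*} [Fintype α] [DecidableEq α] [AddCommGroup M] [Module ℝ M]

theorem average_perm_apply (a : α) (F : α → M) :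
    (Fintype.card (Perm α) : ℝ)⁻¹ • ∑ π : Perm α, F (π a)
      = (Fintype.card α : ℝ)⁻¹ • ∑ x, F x := by
  rw [Fintype.card_perm]
  exact inv_smul_eq_inv_smul_of_nsmul_eq (Fintype.card_pos_iff.mpr ⟨a⟩).ne' (factorial_ne_zero _)
    (card_nsmul_sum_perm_apply a F)

theorem average_perm_apply_apply {a b : α} (hab : a ≠ b) (F : α → α → M) :
    (Fintype.card (Perm α) : ℝ)⁻¹ • ∑ π : Perm α, F (π a) (π b)
      = ((Fintype.card α : ℝ) * (Fintype.card α - 1))⁻¹ • ∑ k, ∑ l ∈ univ.erase k, F k l := by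
  have hcard : 1 < Fintype.card α := Fintype.one_lt_card_iff.mpr ⟨a, b, hab⟩
  rw [Fintype.card_perm, show (Fintype.card α : ℝ) * (Fintype.card α - 1)
    = ((Fintype.card α * (Fintype.card α - 1) : ℕ) : ℝ) by push_cast [hcard.le]; ring]
  exact inv_smul_eq_inv_smul_of_nsmul_eq (Nat.mul_ne_zero (by omega) (by omega))
    (factorial_ne_zero _) (card_mul_pred_nsmul_sum_perm_apply_apply hab F)

end PermutationAverages

theorem sum_mul_mul_ite_eq {ι : Type*} [Fintype ι] [DecidableEq ι] (c : ι → ℝ) (a b : ℝ) :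
    ∑ k, ∑ l, c k * c l * (if k = l then a else b)
      = b * (∑ k, c k) ^ 2 + (a - b) * ∑ k, c k ^ 2 := by
  have h : ∀ k l, c k * c l * (if k = l then a else b)
      = b * (c k * c l) + (if k = l then (a - b) * c k ^ 2 else 0) := by
    intro k l; split_ifs with hkl <;> [subst hkl; skip] <;> ring
  simp only [h, Finset.sum_add_distrib, Finset.sum_ite_eq, Finset.mem_univ, if_true,
    ← Finset.mul_sum, sq, Finset.sum_mul_sum]

section PermutationQuadraticForms

variable {α E : Type*} [Fintype α] [DecidableEq α] [NormedAddCommGroup E] [InnerProductSpace ℝ E]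

theorem average_perm_inner_apply_apply (w : α → E) (k l : α) :
    (Fintype.card (Perm α) : ℝ)⁻¹ * ∑ π : Perm α, ⟪w (π k), w (π l)⟫_ℝ
      = if k = l then (∑ x, ‖w x‖ ^ 2) / Fintype.card α
        else (‖∑ x, w x‖ ^ 2 - ∑ x, ‖w x‖ ^ 2) / (Fintype.card α * (Fintype.card α - 1)) := by
  split_ifs with hkl
  · subst hkl
    simpa [real_inner_self_eq_norm_sq, div_eq_inv_mul] using
      average_perm_apply k fun x => ‖w x‖ ^ 2
  · have hoff : ∑ x, ∑ y ∈ univ.erase x, ⟪w x, w y⟫_ℝ = ‖∑ x, w x‖ ^ 2 - ∑ x, ‖w x‖ ^ 2 := by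
      simp_rw [Finset.sum_erase_eq_sub (Finset.mem_univ _), ← real_inner_self_eq_norm_sq,
        Finset.sum_sub_distrib, ← inner_sum, ← sum_inner]
    have h := average_perm_apply_apply hkl fun x y => ⟪w x, w y⟫_ℝ
    rw [smul_eq_mul, smul_eq_mul, hoff] at h
    rw [h, div_eq_inv_mul]

theorem average_perm_norm_add_sum_smul_sq (t : E) (c : α → ℝ) (w : α → E) :
    (Fintype.card (Perm α) : ℝ)⁻¹ * ∑ π : Perm α, ‖t + ∑ k, c k • w (π k)‖ ^ 2
      = ‖t‖ ^ 2 + 2 * (∑ k, c k) / Fintype.card α * ⟪t, ∑ x, w x⟫_ℝ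
        + (∑ k, c k ^ 2) * (∑ x, ‖w x‖ ^ 2) / Fintype.card α
        + ((∑ k, c k) ^ 2 - ∑ k, c k ^ 2) * (‖∑ x, w x‖ ^ 2 - ∑ x, ‖w x‖ ^ 2)
          / (Fintype.card α * (Fintype.card α - 1)) := by
  have hexpand : ∀ π : Perm α, ‖t + ∑ k, c k • w (π k)‖ ^ 2 = ‖t‖ ^ 2
      + 2 * ∑ k, c k * ⟪t, w (π k)⟫_ℝ + ∑ k, ∑ l, c k * c l * ⟪w (π k), w (π l)⟫_ℝ := by
    intro π
    simp_rw [norm_add_sq_real, ← real_inner_self_eq_norm_sq (∑ k, _), inner_sum, sum_inner,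
      real_inner_smul_left, real_inner_smul_right, mul_assoc]
    exact congrArg _ Finset.sum_comm
  have hmean : ∀ k, (Fintype.card (Perm α) : ℝ)⁻¹ * ∑ π : Perm α, ⟪t, w (π k)⟫_ℝ
      = ⟪t, ∑ x, w x⟫_ℝ / Fintype.card α := by
    intro k
    simpa [inner_sum, div_eq_inv_mul] using average_perm_apply k fun x => ⟪t, w x⟫_ℝ
  have hlin : (Fintype.card (Perm α) : ℝ)⁻¹ * (2 * ∑ π : Perm α, ∑ k, c k * ⟪t, w (π k)⟫_ℝ)
      = 2 * ∑ k, c k * ((Fintype.card (Perm α) : ℝ)⁻¹ * ∑ π : Perm α, ⟪t, w (π k)⟫_ℝ) := by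
    simp_rw [Finset.mul_sum]; rw [Finset.sum_comm]; ring_nf
  have hquad : (Fintype.card (Perm α) : ℝ)⁻¹
        * ∑ π : Perm α, ∑ k, ∑ l, c k * c l * ⟪w (π k), w (π l)⟫_ℝ
      = ∑ k, ∑ l, c k * c l
        * ((Fintype.card (Perm α) : ℝ)⁻¹ * ∑ π : Perm α, ⟪w (π k), w (π l)⟫_ℝ) := by
    simp_rw [Finset.mul_sum]; rw [Finset.sum_comm]; simp_rw [Finset.sum_comm (γ := Perm α)]; ring_nf
  have hcard : (Fintype.card (Perm α) : ℝ) ≠ 0 := by positivity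
  simp_rw [hexpand, Finset.sum_add_distrib, mul_add, Finset.sum_const, Finset.card_univ,
    nsmul_eq_mul, inv_mul_cancel_left₀ hcard, ← Finset.mul_sum]
  rw [hlin, hquad]
  simp_rw [hmean, average_perm_inner_apply_apply, sum_mul_mul_ite_eq, ← Finset.sum_mul]
  ring

end PermutationQuadraticForms

section IndependentCoordinates

variable {ι G E : Type*} [Fintype ι] [DecidableEq ι] [Fintype G]
  [NormedAddCommGroup E] [InnerProductSpace ℝ E]

theorem average_pi_apply [Nonempty G] (i : ι) (F : G → ℝ) :
    (Fintype.card (ι → G) : ℝ)⁻¹ * ∑ σ : ι → G, F (σ i)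
      = (Fintype.card G : ℝ)⁻¹ * ∑ g, F g := by
  have hsum : ∑ σ : ι → G, F (σ i) = Fintype.card ({ j // j ≠ i } → G) • ∑ g, F g := by
    rw [Fintype.sum_equiv (funSplitAt i G) (fun σ => F (σ i)) (fun p => F p.1) fun σ => rfl,
      Fintype.sum_prod_type, Finset.smul_sum]
    simp
  have hcard : Fintype.card (ι → G) = Fintype.card G * Fintype.card ({ j // j ≠ i } → G) := by
    rw [Fintype.card_congr (funSplitAt i G), Fintype.card_prod]
  have hpos : (Fintype.card ({ j // j ≠ i } → G) : ℝ) ≠ 0 := by positivity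
  rw [hsum, hcard, nsmul_eq_mul]
  push_cast
  field_simp

theorem sum_pi_inner_apply_apply_eq_zero {i j : ι} (hij : i ≠ j) (P Q : G → E)
    (hP : ∑ g, P g = 0) : ∑ σ : ι → G, ⟪P (σ i), Q (σ j)⟫_ℝ = 0 := by
  rw [Fintype.sum_equiv (funSplitAt i G) (fun σ => ⟪P (σ i), Q (σ j)⟫_ℝ)
    (fun p => ⟪P p.1, Q (p.2 ⟨j, hij.symm⟩)⟫_ℝ)
    fun σ => rfl, Fintype.sum_prod_type, Finset.sum_comm]
  simp [← sum_inner, hP]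

theorem average_pi_norm_add_sum_sq_of_sum_eq_zero [Nonempty G] (C : E) (Y : ι → G → E)
    (hY : ∀ i, ∑ g, Y i g = 0) :
    (Fintype.card (ι → G) : ℝ)⁻¹ * ∑ σ : ι → G, ‖C + ∑ i, Y i (σ i)‖ ^ 2
      = ‖C‖ ^ 2 + ∑ i, (Fintype.card G : ℝ)⁻¹ * ∑ g, ‖Y i g‖ ^ 2 := by
  have hexpand : ∀ σ : ι → G, ‖C + ∑ i, Y i (σ i)‖ ^ 2
      = ‖C‖ ^ 2 + 2 * ∑ i, ⟪C, Y i (σ i)⟫_ℝ + ∑ i, ∑ j, ⟪Y i (σ i), Y j (σ j)⟫_ℝ := by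
    intro σ
    rw [norm_add_sq_real, ← real_inner_self_eq_norm_sq (∑ i, _), inner_sum, sum_inner]
    simp_rw [inner_sum]
  have hcross : ∀ i, (Fintype.card (ι → G) : ℝ)⁻¹ * ∑ σ : ι → G, ⟪C, Y i (σ i)⟫_ℝ = 0 := by
    intro i
    rw [average_pi_apply i fun g => ⟪C, Y i g⟫_ℝ, ← inner_sum, hY, inner_zero_right, mul_zero]
  have hdiag : ∀ i j, (Fintype.card (ι → G) : ℝ)⁻¹ * ∑ σ : ι → G, ⟪Y i (σ i), Y j (σ j)⟫_ℝ
      = if i = j then (Fintype.card G : ℝ)⁻¹ * ∑ g, ‖Y i g‖ ^ 2 else 0 := by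
    intro i j
    split_ifs with hij
    · subst hij
      simpa [real_inner_self_eq_norm_sq] using average_pi_apply i fun g => ‖Y i g‖ ^ 2
    · rw [sum_pi_inner_apply_apply_eq_zero hij _ (Y j) (hY i), mul_zero]
  have hlin : (Fintype.card (ι → G) : ℝ)⁻¹ * (2 * ∑ σ : ι → G, ∑ i, ⟪C, Y i (σ i)⟫_ℝ)
      = 2 * ∑ i, (Fintype.card (ι → G) : ℝ)⁻¹ * ∑ σ : ι → G, ⟪C, Y i (σ i)⟫_ℝ := by
    simp_rw [Finset.mul_sum, mul_left_comm _ (2 : ℝ)]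
    exact Finset.sum_comm
  have hquad : (Fintype.card (ι → G) : ℝ)⁻¹ * ∑ σ : ι → G, ∑ i, ∑ j, ⟪Y i (σ i), Y j (σ j)⟫_ℝ
      = ∑ i, ∑ j, (Fintype.card (ι → G) : ℝ)⁻¹ * ∑ σ : ι → G, ⟪Y i (σ i), Y j (σ j)⟫_ℝ := by
    simp_rw [Finset.mul_sum]
    rw [Finset.sum_comm]
    exact Finset.sum_congr rfl fun _ _ => Finset.sum_comm
  have hcard : (Fintype.card (ι → G) : ℝ) ≠ 0 := by positivity
  simp_rw [hexpand, Finset.sum_add_distrib, mul_add, Finset.sum_const, Finset.card_univ,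
    nsmul_eq_mul, inv_mul_cancel_left₀ hcard, ← Finset.mul_sum]
  rw [hlin, hquad]
  simp only [hcross, hdiag, Finset.sum_ite_eq, Finset.mem_univ, if_true, Finset.sum_const_zero,
    mul_zero, add_zero, Finset.mul_sum]

theorem average_pi_norm_add_sum_sq [Nonempty G] (c : E) (Z : ι → G → E) (m : ι → E)
    (hm : ∀ i, (Fintype.card G : ℝ)⁻¹ • ∑ g, Z i g = m i) :
    (Fintype.card (ι → G) : ℝ)⁻¹ * ∑ σ : ι → G, ‖c + ∑ i, Z i (σ i)‖ ^ 2
      = ‖c + ∑ i, m i‖ ^ 2 + ∑ i, (Fintype.card G : ℝ)⁻¹ * ∑ g, ‖Z i g - m i‖ ^ 2 := by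
  have hcentred : ∀ i, ∑ g, (Z i g - m i) = 0 := fun i => by
    rw [Finset.sum_sub_distrib, Finset.sum_const, Finset.card_univ, ← hm i,
      ← Nat.cast_smul_eq_nsmul ℝ, smul_inv_smul₀ (by positivity), sub_self]
  have hsplit : ∀ σ : ι → G, c + ∑ i, Z i (σ i) = (c + ∑ i, m i) + ∑ i, (Z i (σ i) - m i) :=
    fun σ => by rw [Finset.sum_sub_distrib]; abel
  simp_rw [hsplit]
  exact average_pi_norm_add_sum_sq_of_sum_eq_zero _ (fun i g => Z i g - m i) hcentred

end IndependentCoordinates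

theorem sum_card_filter_eq_nsmul {ι κ M : Type*} [Fintype ι] [Fintype κ] [DecidableEq κ]
    [AddCommMonoid M] (f : ι → κ) (g : κ → M) :
    ∑ k, (univ.filter fun i => f i = k).card • g k = ∑ i, g (f i) := by
  simpa using Finset.sum_fiberwise' univ f g

theorem sum_card_filter_add_smul {ι κ F : Type*} [Fintype ι] [Fintype κ] [DecidableEq κ]
    [AddCommGroup F] [Module ℝ F] (f₁ f₂ : ι → κ) (g : κ → F) :
    ∑ k, (((univ.filter fun i => f₁ i = k).card : ℝ)
        + ((univ.filter fun i => f₂ i = k).card : ℝ)) • g k = ∑ i, (g (f₁ i) + g (f₂ i)) := by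
  simp_rw [add_smul, Finset.sum_add_distrib, Nat.cast_smul_eq_nsmul, sum_card_filter_eq_nsmul]

theorem sum_fin_cast (m : ℕ) : ∑ k : Fin m, (k : ℝ) = m * (m - 1) / 2 := by
  rw [Fin.sum_univ_eq_sum_range (fun k => (k : ℝ))]
  induction m with
  | zero => simp
  | succ m ih => rw [Finset.sum_range_succ, ih]; push_cast; ring

theorem sum_fin_cast_sq (m : ℕ) : ∑ k : Fin m, (k : ℝ) ^ 2 = m * (m - 1) * (2 * m - 1) / 6 := by
  rw [Fin.sum_univ_eq_sum_range (fun k => (k : ℝ) ^ 2)]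
  induction m with
  | zero => simp
  | succ m ih => rw [Finset.sum_range_succ, ih]; push_cast; ring

theorem sum_fin_ite_le_one {n j : ℕ} (hj : j < n) :
    ∑ k : Fin n, (if (k : ℕ) ≤ j then (1 : ℝ) else 0) = j + 1 := by
  rw [Fin.sum_univ_eq_sum_range (fun k => if k ≤ j then (1 : ℝ) else 0), Finset.sum_boole,
    show (range n).filter (· ≤ j) = range (j + 1) by ext; simp; omega]
  simp

theorem sum_fin_ite_ge_one {m k : ℕ} (hk : k ≤ m) :
    ∑ j : Fin m, (if k ≤ (j : ℕ) then (1 : ℝ) else 0) = m - k := by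
  rw [Fin.sum_univ_eq_sum_range (fun j => if k ≤ j then (1 : ℝ) else 0), Finset.sum_boole,
    show (range m).filter (k ≤ ·) = Ico k m by ext; simp; omega]
  simp [Nat.cast_sub hk]

section SubdividedEdge

variable {E : Type*} [NormedAddCommGroup E] [InnerProductSpace ℝ E] {n : ℕ}

def subdivisionPoint (t : E) (w : Fin n → E) (π : Perm (Fin n)) (j : Fin (n - 1)) : E :=
  t + ∑ k : Fin n, if (k : ℕ) ≤ j then w (π k) else 0

theorem subdivisionPoint_eq (t : E) (w : Fin n → E) (π : Perm (Fin n)) (j : Fin (n - 1)) :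
    subdivisionPoint t w π j = t + ∑ k : Fin n, (if (k : ℕ) ≤ j then (1 : ℝ) else 0) • w (π k) := by
  simp [subdivisionPoint, ite_smul]

theorem sum_subdivisionPoint (hn : 1 ≤ n) (t : E) (w : Fin n → E) (π : Perm (Fin n)) :
    ∑ j, subdivisionPoint t w π j
      = ((n : ℝ) - 1) • t + ∑ k : Fin n, ((n : ℝ) - 1 - k) • w (π k) := by
  simp_rw [subdivisionPoint_eq, Finset.sum_add_distrib, Finset.sum_const, Finset.card_univ,
    Fintype.card_fin, ← Nat.cast_smul_eq_nsmul ℝ, Nat.cast_sub hn, Nat.cast_one]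
  rw [Finset.sum_comm]
  simp_rw [← Finset.sum_smul]
  congr 2 with k
  rw [sum_fin_ite_ge_one (by omega), Nat.cast_sub hn, Nat.cast_one]

theorem average_sum_subdivisionPoint (hn : 1 ≤ n) (t h : E) (w : Fin n → E)
    (hw : ∑ k, w k = h - t) :
    (Fintype.card (Perm (Fin n)) : ℝ)⁻¹ • ∑ π : Perm (Fin n), ∑ j, subdivisionPoint t w π j
      = (((n : ℝ) - 1) / 2) • (h + t) := by
  rw [show (((n : ℝ) - 1) / 2) • (h + t) = ((n : ℝ) - 1) • t + (((n : ℝ) - 1) / 2) • (h - t) by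
    module]
  have hcard : (Fintype.card (Perm (Fin n)) : ℝ) ≠ 0 := by positivity
  have hk : ∀ k : Fin n, (Fintype.card (Perm (Fin n)) : ℝ)⁻¹ • ∑ π : Perm (Fin n), w (π k)
      = (n : ℝ)⁻¹ • (h - t) := by
    intro k
    simpa [hw] using average_perm_apply k w
  simp_rw [sum_subdivisionPoint hn, Finset.sum_add_distrib, Finset.sum_const, Finset.card_univ,
    ← Nat.cast_smul_eq_nsmul ℝ, smul_add, smul_smul, inv_mul_cancel_left₀ hcard]
  rw [Finset.sum_comm, Finset.smul_sum]
  congr 1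
  calc ∑ k : Fin n,
        (Fintype.card (Perm (Fin n)) : ℝ)⁻¹ • ∑ π : Perm (Fin n), ((n : ℝ) - 1 - k) • w (π k)
      = ∑ k : Fin n, (((n : ℝ) - 1 - k) * (n : ℝ)⁻¹) • (h - t) := by
        refine Finset.sum_congr rfl fun k _ => ?_
        rw [← Finset.smul_sum, smul_comm, hk, smul_smul]
    _ = (((n : ℝ) - 1) / 2) • (h - t) := by
        rw [← Finset.sum_smul, ← Finset.sum_mul, Finset.sum_sub_distrib, sum_fin_cast]
        congr 1
        simp only [Finset.sum_sub_distrib, Finset.sum_const, Finset.card_univ, Fintype.card_fin,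
          nsmul_eq_mul, mul_one]
        field_simp
        ring

theorem average_norm_sq_sum_subdivisionPoint_sub (hn : 2 ≤ n) (t h : E) (w : Fin n → E)
    (hw : ∑ k, w k = h - t) :
    (Fintype.card (Perm (Fin n)) : ℝ)⁻¹ * ∑ π : Perm (Fin n),
        ‖∑ j, subdivisionPoint t w π j - (((n : ℝ) - 1) / 2) • (h + t)‖ ^ 2
      = ((n : ℝ) + 1) / 12 * (n * ∑ k, ‖w k‖ ^ 2 - ‖h - t‖ ^ 2) := by
  have hcentre : ∀ π : Perm (Fin n),
      ∑ j, subdivisionPoint t w π j - (((n : ℝ) - 1) / 2) • (h + t)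
        = 0 + ∑ k : Fin n, (((n : ℝ) - 1) / 2 - k) • w (π k) := by
    intro π
    rw [show (((n : ℝ) - 1) / 2) • (h + t) = ((n : ℝ) - 1) • t + (((n : ℝ) - 1) / 2) • (h - t) by
      module,
      sum_subdivisionPoint (by omega), ← hw, ← Equiv.sum_comp π w, Finset.smul_sum, zero_add,
      add_sub_add_left_eq_sub, ← Finset.sum_sub_distrib]
    congr 1 with k
    rw [← sub_smul]
    ring_nf
  have hsum : ∑ k : Fin n, (((n : ℝ) - 1) / 2 - k) = 0 := by
    rw [Finset.sum_sub_distrib, sum_fin_cast, Finset.sum_const, Finset.card_univ, Fintype.card_fin,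
      nsmul_eq_mul]
    ring
  have hsum_sq : ∑ k : Fin n, (((n : ℝ) - 1) / 2 - k) ^ 2 = n * ((n : ℝ) ^ 2 - 1) / 12 := by
    simp_rw [sub_sq, Finset.sum_add_distrib, Finset.sum_sub_distrib, ← Finset.mul_sum,
      sum_fin_cast, sum_fin_cast_sq, Finset.sum_const, Finset.card_univ, Fintype.card_fin,
      nsmul_eq_mul]
    ring
  have hn' : (n : ℝ) - 1 ≠ 0 := sub_ne_zero.mpr (by exact_mod_cast (by omega : n ≠ 1))
  simp_rw [hcentre, average_perm_norm_add_sum_smul_sq, hsum, hsum_sq, hw, Fintype.card_fin,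
    norm_zero]
  field_simp
  ring

theorem average_sum_norm_sq_subdivisionPoint (hn : 2 ≤ n) (t h : E) (w : Fin n → E)
    (hw : ∑ k, w k = h - t) :
    (Fintype.card (Perm (Fin n)) : ℝ)⁻¹ * ∑ π : Perm (Fin n), ∑ j, ‖subdivisionPoint t w π j‖ ^ 2
      = ((n : ℝ) - 1) / 2 * (‖h‖ ^ 2 + ‖t‖ ^ 2)
        + ((n : ℝ) + 1) / 6 * (∑ k, ‖w k‖ ^ 2 - ‖h - t‖ ^ 2) := by
  set A := ∑ k, ‖w k‖ ^ 2
  have hpoint : ∀ j : Fin (n - 1), (Fintype.card (Perm (Fin n)) : ℝ)⁻¹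
        * ∑ π : Perm (Fin n), ‖subdivisionPoint t w π j‖ ^ 2
      = ‖t‖ ^ 2 + ((j : ℝ) + 1) * ((2 * ⟪t, h - t⟫_ℝ + A) / n)
        + ((j : ℝ) + 1) * j * ((‖h - t‖ ^ 2 - A) / (n * (n - 1))) := by
    intro j
    have hcount := sum_fin_ite_le_one (n := n) (j := j) (by omega)
    simp_rw [subdivisionPoint_eq, average_perm_norm_add_sum_smul_sq, hw, Fintype.card_fin,
      ite_pow, one_pow, zero_pow two_ne_zero, hcount]
    ring
  have hinner : ⟪t, h - t⟫_ℝ = (‖h‖ ^ 2 - ‖t‖ ^ 2 - ‖h - t‖ ^ 2) / 2 := by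
    rw [inner_sub_right, real_inner_self_eq_norm_sq, norm_sub_sq_real, real_inner_comm]
    ring
  have hn' : (n : ℝ) - 1 ≠ 0 := sub_ne_zero.mpr (by exact_mod_cast (by omega : n ≠ 1))
  rw [Finset.sum_comm, Finset.mul_sum]
  simp_rw [hpoint, Finset.sum_add_distrib, ← Finset.sum_mul, add_mul, mul_add, one_mul,
    Finset.sum_add_distrib, ← pow_two, sum_fin_cast, sum_fin_cast_sq, Finset.sum_const,
    Finset.card_univ, Fintype.card_fin, nsmul_eq_mul, Nat.cast_sub (show 1 ≤ n by omega),
    Nat.cast_one, hinner]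
  field_simp
  ring

end SubdividedEdge

section RadiusOfGyration

variable {V : Type*} [Fintype V] {d : ℕ}

theorem rg2_eq_sub (X : V → EuclideanSpace ℝ (Fin d)) (Ω : V → ℝ) :
    rg2 X Ω = (∑ v, Ω v)⁻¹ * ∑ v, Ω v * ‖X v‖ ^ 2 - ‖com X Ω‖ ^ 2 := by
  by_cases hΩ : ∑ v, Ω v = 0
  · simp [rg2, com, hΩ]
  have hcom : ∑ v, Ω v • X v = (∑ v, Ω v) • com X Ω := by
    rw [com, smul_inv_smul₀ hΩ]
  have hexpand : ∀ v, Ω v * ‖X v - com X Ω‖ ^ 2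
      = Ω v * ‖X v‖ ^ 2 - 2 * ⟪Ω v • X v, com X Ω⟫_ℝ + Ω v * ‖com X Ω‖ ^ 2 := by
    intro v
    rw [norm_sub_sq_real, real_inner_smul_left]
    ring
  simp_rw [rg2, hexpand, Finset.sum_add_distrib, Finset.sum_sub_distrib, ← Finset.mul_sum,
    ← sum_inner, hcom, real_inner_smul_left, real_inner_self_eq_norm_sq, ← Finset.sum_mul]
  field_simp
  ring

theorem uRg2_eq_sub (X : V → EuclideanSpace ℝ (Fin d)) :
    uRg2 X = (Fintype.card V : ℝ)⁻¹ * ∑ v, ‖X v‖ ^ 2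
      - (Fintype.card V : ℝ)⁻¹ ^ 2 * ‖∑ v, X v‖ ^ 2 := by
  have hrg2 : uRg2 X = rg2 X 1 := by simp [uRg2, rg2, uMu, com]
  rw [hrg2, rg2_eq_sub, com, norm_smul, mul_pow, Real.norm_eq_abs, sq_abs]
  simp

end RadiusOfGyration

section SubdividedGraph

variable {d n v' e' : ℕ}

/-- The embedding `X^σ` of the subdivided graph. -/
noncomputable def subdividedEmbedding (X' : Fin v' → EuclideanSpace ℝ (Fin d))
    (tl : Fin e' → Fin v') (w : Fin e' → Fin n → EuclideanSpace ℝ (Fin d))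
    (σ : Fin e' → Perm (Fin n)) :
    Fin v' ⊕ Fin e' × Fin (n - 1) → EuclideanSpace ℝ (Fin d) :=
  Sum.elim X' fun p => xpos X' tl w σ p.1 p.2

theorem card_subdividedVertices (hn : 1 ≤ n) :
    (Fintype.card (Fin v' ⊕ Fin e' × Fin (n - 1)) : ℝ) = v' + ((n : ℝ) - 1) * e' := by
  simp only [Fintype.card_sum, Fintype.card_prod, Fintype.card_fin, Nat.cast_add, Nat.cast_mul,
    Nat.cast_sub hn, Nat.cast_one]
  ring

theorem vertexCount_pos (hn : 1 ≤ n) (hv' : 1 ≤ v') : 0 < (v' : ℝ) + ((n : ℝ) - 1) * e' := by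
  have : (1 : ℝ) ≤ v' := by exact_mod_cast hv'
  have : (0 : ℝ) ≤ (n : ℝ) - 1 := sub_nonneg.mpr (by exact_mod_cast hn)
  positivity

variable (X' : Fin v' → EuclideanSpace ℝ (Fin d)) (head tl : Fin e' → Fin v')
  (w : Fin e' → Fin n → EuclideanSpace ℝ (Fin d))

theorem sum_subdividedEmbedding (σ : Fin e' → Perm (Fin n)) :
    ∑ a, subdividedEmbedding X' tl w σ a
      = ∑ k, X' k + ∑ i, ∑ j, subdivisionPoint (X' (tl i)) (w i) (σ i) j := by
  simp only [subdividedEmbedding, Fintype.sum_sum_type, Fintype.sum_prod_type, Sum.elim_inl,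
    Sum.elim_inr]
  rfl

theorem sum_norm_sq_subdividedEmbedding (σ : Fin e' → Perm (Fin n)) :
    ∑ a, ‖subdividedEmbedding X' tl w σ a‖ ^ 2
      = ∑ k, ‖X' k‖ ^ 2 + ∑ i, ∑ j, ‖subdivisionPoint (X' (tl i)) (w i) (σ i) j‖ ^ 2 := by
  simp only [subdividedEmbedding, Fintype.sum_sum_type, Fintype.sum_prod_type, Sum.elim_inl,
    Sum.elim_inr]
  rfl

theorem average_sum_norm_sq_subdividedEmbedding (hn : 2 ≤ n)
    (hw : ∀ i, ∑ j, w i j = X' (head i) - X' (tl i)) :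
    (Fintype.card (Fin e' → Perm (Fin n)) : ℝ)⁻¹
        * ∑ σ, ∑ a, ‖subdividedEmbedding X' tl w σ a‖ ^ 2
      = ∑ k, ‖X' k‖ ^ 2 + ∑ i, (((n : ℝ) - 1) / 2 * (‖X' (head i)‖ ^ 2 + ‖X' (tl i)‖ ^ 2)
        + ((n : ℝ) + 1) / 6 * (∑ j, ‖w i j‖ ^ 2 - ‖X' (head i) - X' (tl i)‖ ^ 2)) := by
  have hcard : (Fintype.card (Fin e' → Perm (Fin n)) : ℝ) ≠ 0 := by positivity
  simp_rw [sum_norm_sq_subdividedEmbedding]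
  rw [Finset.sum_add_distrib, mul_add, Finset.sum_const, Finset.card_univ, nsmul_eq_mul,
    inv_mul_cancel_left₀ hcard, Finset.sum_comm, Finset.mul_sum]
  congr 1
  refine Finset.sum_congr rfl fun i _ => ?_
  rw [average_pi_apply i fun π => ∑ j, ‖subdivisionPoint (X' (tl i)) (w i) π j‖ ^ 2,
    average_sum_norm_sq_subdivisionPoint hn _ _ _ (hw i)]

theorem average_norm_sq_sum_subdividedEmbedding (hn : 2 ≤ n)
    (hw : ∀ i, ∑ j, w i j = X' (head i) - X' (tl i)) :
    (Fintype.card (Fin e' → Perm (Fin n)) : ℝ)⁻¹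
        * ∑ σ, ‖∑ a, subdividedEmbedding X' tl w σ a‖ ^ 2
      = ‖∑ k, X' k + ∑ i, (((n : ℝ) - 1) / 2) • (X' (head i) + X' (tl i))‖ ^ 2
        + ∑ i, ((n : ℝ) + 1) / 12 * (n * ∑ j, ‖w i j‖ ^ 2 - ‖X' (head i) - X' (tl i)‖ ^ 2) := by
  simp_rw [sum_subdividedEmbedding]
  rw [average_pi_norm_add_sum_sq _ (fun i π => ∑ j, subdivisionPoint (X' (tl i)) (w i) π j) _
    fun i => average_sum_subdivisionPoint (by omega) _ _ _ (hw i)]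
  congr 1
  exact Finset.sum_congr rfl fun i _ =>
    average_norm_sq_sum_subdivisionPoint_sub hn _ _ _ (hw i)

theorem rg2_degree_weights (hn : 2 ≤ n) (hv' : 1 ≤ v') :
    rg2 X' (fun k => (((univ.filter fun i => head i = k).card : ℝ)
        + ((univ.filter fun i => tl i = k).card : ℝ)) + 2 / ((n : ℝ) - 1))
      = ((n : ℝ) - 1) / (2 * (v' + ((n : ℝ) - 1) * e'))
          * ∑ i, (‖X' (head i)‖ ^ 2 + ‖X' (tl i)‖ ^ 2)
        + (v' + ((n : ℝ) - 1) * e')⁻¹ * ∑ k, ‖X' k‖ ^ 2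
        - (v' + ((n : ℝ) - 1) * e')⁻¹ ^ 2
          * ‖∑ k, X' k + ∑ i, (((n : ℝ) - 1) / 2) • (X' (head i) + X' (tl i))‖ ^ 2 := by
  have hn' : (n : ℝ) - 1 ≠ 0 := sub_ne_zero.mpr (by exact_mod_cast (by omega : n ≠ 1))
  have hN := (vertexCount_pos (by omega : 1 ≤ n) hv' (e' := e')).ne'
  have hweight : ∑ k, ((((univ.filter fun i => head i = k).card : ℝ)
      + ((univ.filter fun i => tl i = k).card : ℝ)) + 2 / ((n : ℝ) - 1))
      = 2 / ((n : ℝ) - 1) * (v' + ((n : ℝ) - 1) * e') := by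
    have := sum_card_filter_add_smul head tl fun _ => (1 : ℝ)
    simp only [smul_eq_mul, mul_one] at this
    simp only [Finset.sum_add_distrib, this, Finset.sum_const, Finset.card_univ, Fintype.card_fin,
      nsmul_eq_mul, mul_one]
    field_simp
    ring
  have hweight_sq : ∑ k, ((((univ.filter fun i => head i = k).card : ℝ)
      + ((univ.filter fun i => tl i = k).card : ℝ)) + 2 / ((n : ℝ) - 1)) * ‖X' k‖ ^ 2
      = ∑ i, (‖X' (head i)‖ ^ 2 + ‖X' (tl i)‖ ^ 2) + 2 / ((n : ℝ) - 1) * ∑ k, ‖X' k‖ ^ 2 := by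
    have := sum_card_filter_add_smul head tl fun k => ‖X' k‖ ^ 2
    simp only [smul_eq_mul] at this
    simp only [add_mul, Finset.sum_add_distrib, ← this, Finset.mul_sum]
  have hweight_smul : ∑ k, ((((univ.filter fun i => head i = k).card : ℝ)
      + ((univ.filter fun i => tl i = k).card : ℝ)) + 2 / ((n : ℝ) - 1)) • X' k
      = (2 / ((n : ℝ) - 1))
        • (∑ k, X' k + ∑ i, (((n : ℝ) - 1) / 2) • (X' (head i) + X' (tl i))) := by
    have hhalf : 2 / ((n : ℝ) - 1) * (((n : ℝ) - 1) / 2) = 1 := by field_simp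
    simp_rw [smul_add, Finset.smul_sum, smul_add, smul_smul, hhalf, one_smul,
      ← sum_card_filter_add_smul head tl X', add_smul, Finset.sum_add_distrib]
    abel
  rw [rg2_eq_sub, com, hweight, hweight_sq, hweight_smul, smul_smul, norm_smul, mul_pow,
    Real.norm_eq_abs, sq_abs]
  field_simp

end SubdividedGraph

theorem average_rg2_subdivided_graph_general {d n v' e' : ℕ}
    (hn : 2 ≤ n) (hv' : 1 ≤ v')
    (head tl : Fin e' → Fin v')
    (X' : Fin v' → EuclideanSpace ℝ (Fin d))
    (w : Fin e' → Fin n → EuclideanSpace ℝ (Fin d))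
    (hw : ∀ i, ∑ j, w i j = X' (head i) - X' (tl i)) :
    (Fintype.card (Fin e' → Equiv.Perm (Fin n)) : ℝ)⁻¹ *
        ∑ σ : Fin e' → Equiv.Perm (Fin n),
          uRg2 (Sum.elim X'
            (fun p : Fin e' × Fin (n - 1) => xpos X' tl w σ p.1 p.2))
      = rg2 X' (fun k =>
            (((univ.filter fun i => head i = k).card : ℝ)
              + ((univ.filter fun i => tl i = k).card : ℝ))
            + 2 / ((n : ℝ) - 1))
        + (((n : ℝ) + 1) * (2 * ((v' : ℝ) + ((n : ℝ) - 1) * (e' : ℝ)) - (n : ℝ))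
              / (12 * ((v' : ℝ) + ((n : ℝ) - 1) * (e' : ℝ)) ^ 2)) *
            (∑ i : Fin e', ∑ j : Fin n, ‖w i j‖ ^ 2)
        - (((n : ℝ) + 1) * (2 * ((v' : ℝ) + ((n : ℝ) - 1) * (e' : ℝ)) - 1)
              / (12 * ((v' : ℝ) + ((n : ℝ) - 1) * (e' : ℝ)) ^ 2)) *
            (∑ i : Fin e', ‖X' (head i) - X' (tl i)‖ ^ 2) := by
  change (Fintype.card (Fin e' → Perm (Fin n)) : ℝ)⁻¹ * ∑ σ, uRg2 (subdividedEmbedding X' tl w σ)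
    = _
  simp_rw [uRg2_eq_sub, card_subdividedVertices (by omega : 1 ≤ n)]
  rw [Finset.sum_sub_distrib, ← Finset.mul_sum, ← Finset.mul_sum, mul_sub, mul_left_comm,
    mul_left_comm _ (_ ^ 2), average_sum_norm_sq_subdividedEmbedding X' head tl w hn hw,
    average_norm_sq_sum_subdividedEmbedding X' head tl w hn hw,
    rg2_degree_weights X' head tl hn hv']
  have hN := (vertexCount_pos (by omega : 1 ≤ n) hv' (e' := e')).ne'
  simp only [Finset.sum_add_distrib, Finset.sum_sub_distrib, ← Finset.mul_sum]
  field_simp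
  ring

/-- Main symmetrization formula: the average over `σ ∈ S = (S_n)^{e'}` of the squared
radius of gyration of the full embedding `X^σ` of the subdivided graph `G` (junctions
indexed by `Fin v'`, intermediate vertices by `Fin e' × Fin (n−1)`, unit weights,
`v = v' + (n−1)e'` vertices in total) equals
`Rg²(X', deg + 2/(n−1)) + ((n+1)(2v−n)/(12v²))·‖W‖² − ((n+1)(2v−1)/(12v²))·‖W'‖²`,
where the junction vertex `k` carries weight `deg(k) + 2/(n−1)` with
`deg(k) = #{i : head i = k} + #{i : tail i = k}`, `‖W‖² = Σᵢ Σⱼ ‖w(i,j)‖²` and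
`‖W'‖² = Σᵢ ‖w'ᵢ‖²`. -/
theorem average_rg2_subdivided_graph {d n v' e' : ℕ}
    (hd : 1 ≤ d) (hn : 2 ≤ n) (hv' : 1 ≤ v') (he' : 1 ≤ e')
    (head tl : Fin e' → Fin v')
    (X' : Fin v' → EuclideanSpace ℝ (Fin d))
    (w : Fin e' → Fin n → EuclideanSpace ℝ (Fin d))
    (hw : ∀ i, ∑ j, w i j = X' (head i) - X' (tl i)) :
    (Fintype.card (Fin e' → Equiv.Perm (Fin n)) : ℝ)⁻¹ *
        ∑ σ : Fin e' → Equiv.Perm (Fin n),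
          uRg2 (Sum.elim X'
            (fun p : Fin e' × Fin (n - 1) => xpos X' tl w σ p.1 p.2))
      = rg2 X' (fun k =>
            (((univ.filter fun i => head i = k).card : ℝ)
              + ((univ.filter fun i => tl i = k).card : ℝ))
            + 2 / ((n : ℝ) - 1))
        + (((n : ℝ) + 1) * (2 * ((v' : ℝ) + ((n : ℝ) - 1) * (e' : ℝ)) - (n : ℝ))
              / (12 * ((v' : ℝ) + ((n : ℝ) - 1) * (e' : ℝ)) ^ 2)) *
            (∑ i : Fin e', ∑ j : Fin n, ‖w i j‖ ^ 2)
        - (((n : ℝ) + 1) * (2 * ((v' : ℝ) + ((n : ℝ) - 1) * (e' : ℝ)) - 1)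
              / (12 * ((v' : ℝ) + ((n : ℝ) - 1) * (e' : ℝ)) ^ 2)) *
            (∑ i : Fin e', ‖X' (head i) - X' (tl i)‖ ^ 2) :=
  average_rg2_subdivided_graph_general hn hv' head tl X' w hw
end

section
/- Let V be a finite index set, X : V → ℝ^d a position function, and Ω_1, …, Ω_m : V → ℝ_{>0} weight functions with Ω = Σ_{i=1}^m Ω_i. Then Rg²(X,Ω) = Σ_{i=1}^m (|Ω_i|/|Ω|) Rg²(X,Ω_i) + (1/(2|Ω|²)) Σ_{i=1}^m Σ_{j=1}^m |Ω_i||Ω_j| ‖μ(X,Ω_i) − μ(X,Ω_j)‖². -/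
open Finset

/-!
Both terms come from the parallel axis theorem: if `m` is a weighted mean of the points `yᵢ`,
then `∑ aᵢ ‖yᵢ - c‖² = ∑ aᵢ ‖yᵢ - m‖² + (∑ aᵢ) ‖m - c‖²` for every `c`.
Applied to each cloud `Ωᵢ` with `c = μ(X, Ω)` it splits `|Ω| Rg²(X, Ω)` into
`∑ |Ωᵢ| Rg²(X, Ωᵢ) + ∑ |Ωᵢ| ‖μ(X, Ωᵢ) - μ(X, Ω)‖²`. Since `μ(X, Ω)` is the `|Ωᵢ|`-weighted mean of
the centers `μ(X, Ωᵢ)`, applying the theorem to these centers with `c = μ(X, Ωⱼ)` and summing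
over `j` turns the last sum into the pairwise one.
-/

section ParallelAxis

variable {ι E : Type*} [NormedAddCommGroup E] [InnerProductSpace ℝ E]
  {s : Finset ι} {a : ι → ℝ} {y : ι → E} {m : E}

theorem sum_mul_norm_sub_sq_eq_of_sum_smul_sub_eq_zero
    (hm : ∑ i ∈ s, a i • (y i - m) = 0) (c : E) :
    ∑ i ∈ s, a i * ‖y i - c‖ ^ 2 =
      ∑ i ∈ s, a i * ‖y i - m‖ ^ 2 + (∑ i ∈ s, a i) * ‖m - c‖ ^ 2 := by
  have hsplit : ∀ i, a i * ‖y i - c‖ ^ 2 =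
      a i * ‖y i - m‖ ^ 2 + 2 * inner ℝ (a i • (y i - m)) (m - c) + a i * ‖m - c‖ ^ 2 := by
    intro i
    rw [← sub_add_sub_cancel (y i) m c, norm_add_sq_real, real_inner_smul_left]
    ring
  rw [sum_congr rfl fun i _ => hsplit i, sum_add_distrib, sum_add_distrib, ← mul_sum,
    ← sum_inner, hm, inner_zero_left, mul_zero, add_zero, sum_mul]

theorem sum_sum_mul_mul_norm_sub_sq_eq_of_sum_smul_sub_eq_zero
    (hm : ∑ i ∈ s, a i • (y i - m) = 0) :
    ∑ i ∈ s, ∑ j ∈ s, a i * a j * ‖y i - y j‖ ^ 2 =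
      2 * (∑ i ∈ s, a i) * ∑ i ∈ s, a i * ‖y i - m‖ ^ 2 := by
  calc ∑ i ∈ s, ∑ j ∈ s, a i * a j * ‖y i - y j‖ ^ 2
      = ∑ i ∈ s, a i * ∑ j ∈ s, a j * ‖y j - y i‖ ^ 2 := by
        refine sum_congr rfl fun i _ => ?_
        rw [mul_sum]
        exact sum_congr rfl fun j _ => by rw [norm_sub_rev]; ring
    _ = ∑ i ∈ s, a i * (∑ j ∈ s, a j * ‖y j - m‖ ^ 2 + (∑ j ∈ s, a j) * ‖y i - m‖ ^ 2) := by
        refine sum_congr rfl fun i _ => ?_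
        rw [sum_mul_norm_sub_sq_eq_of_sum_smul_sub_eq_zero hm, norm_sub_rev m]
    _ = 2 * (∑ i ∈ s, a i) * ∑ i ∈ s, a i * ‖y i - m‖ ^ 2 := by
        simp only [mul_add, sum_add_distrib, ← sum_mul, mul_left_comm (a _), ← mul_sum]
        ring

end ParallelAxis

section CenterOfMass

variable {V : Type*} [Fintype V] {d : ℕ} (X : V → EuclideanSpace ℝ (Fin d)) {w : V → ℝ}

theorem sum_smul_com (hw : ∑ v, w v ≠ 0) : (∑ v, w v) • com X w = ∑ v, w v • X v := by
  rw [com, smul_smul, mul_inv_cancel₀ hw, one_smul]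

theorem sum_smul_sub_com_eq_zero (hw : ∑ v, w v ≠ 0) : ∑ v, w v • (X v - com X w) = 0 := by
  rw [sum_congr rfl fun v _ => smul_sub (w v) (X v) (com X w), sum_sub_distrib, ← sum_smul,
    sum_smul_com X hw, sub_self]

theorem sum_mul_norm_sub_sq_eq_mul_rg2_add (hw : ∑ v, w v ≠ 0) (c : EuclideanSpace ℝ (Fin d)) :
    ∑ v, w v * ‖X v - c‖ ^ 2 = (∑ v, w v) * (rg2 X w + ‖com X w - c‖ ^ 2) := by
  rw [sum_mul_norm_sub_sq_eq_of_sum_smul_sub_eq_zero (sum_smul_sub_com_eq_zero X hw), rg2,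
    mul_add, mul_inv_cancel_left₀ hw]

variable {ι : Type*} [Fintype ι] {Ω : ι → V → ℝ}

theorem sum_smul_sub_com_sum_eq_zero (hΩ : ∀ i, ∑ v, Ω i v ≠ 0)
    (htot : ∑ v, ∑ i, Ω i v ≠ 0) :
    ∑ i, (∑ v, Ω i v) • (com X (Ω i) - com X fun v => ∑ i, Ω i v) = 0 := by
  rw [sum_congr rfl fun i _ => smul_sub _ _ _, sum_sub_distrib, ← sum_smul, sum_comm,
    sum_smul_com X htot, sum_congr rfl fun i _ => sum_smul_com X (hΩ i), sum_comm]
  simp only [sum_smul, sub_self]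

theorem mul_rg2_sum (hΩ : ∀ i, ∑ v, Ω i v ≠ 0) (htot : ∑ v, ∑ i, Ω i v ≠ 0) :
    (∑ v, ∑ i, Ω i v) * rg2 X (fun v => ∑ i, Ω i v) =
      ∑ i, (∑ v, Ω i v) * (rg2 X (Ω i) + ‖com X (Ω i) - com X fun v => ∑ i, Ω i v‖ ^ 2) := by
  rw [rg2, mul_inv_cancel_left₀ htot]
  simp only [sum_mul, ← sum_mul_norm_sub_sq_eq_mul_rg2_add X (hΩ _)]
  exact sum_comm

end CenterOfMass

/-- Splitting formula for the radius of gyration: if `Ω = Σᵢ Ωᵢ`, then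
`Rg²(X,Ω) = Σᵢ (|Ωᵢ|/|Ω|) Rg²(X,Ωᵢ)
  + (1/(2|Ω|²)) Σᵢ Σⱼ |Ωᵢ||Ωⱼ| ‖μ(X,Ωᵢ) − μ(X,Ωⱼ)‖²`. -/
theorem rg2_splitting {V : Type*} [Fintype V] {d m : ℕ}
    (X : V → EuclideanSpace ℝ (Fin d)) (Ω : Fin m → V → ℝ)
    (hΩ : ∀ i v, 0 < Ω i v) :
    rg2 X (fun v => ∑ i, Ω i v) =
      (∑ i, ((∑ v, Ω i v) / (∑ v, ∑ i, Ω i v)) * rg2 X (Ω i)) +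
      (1 / (2 * (∑ v, ∑ i, Ω i v) ^ 2)) *
        ∑ i, ∑ j,
          (∑ v, Ω i v) * (∑ v, Ω j v) * ‖com X (Ω i) - com X (Ω j)‖ ^ 2 := by
  by_cases htot : ∑ v, ∑ i, Ω i v = 0
  · simp [rg2, htot]
  have : Nonempty V := not_isEmpty_iff.mp fun _ => htot (by simp)
  have hΩ' : ∀ i, ∑ v, Ω i v ≠ 0 := fun i => (sum_pos (fun v _ => hΩ i v) univ_nonempty).ne'
  have hpairs := sum_sum_mul_mul_norm_sub_sq_eq_of_sum_smul_sub_eq_zero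
    (sum_smul_sub_com_sum_eq_zero X hΩ' htot)
  rw [show ∑ i, ∑ v, Ω i v = ∑ v, ∑ i, Ω i v from sum_comm] at hpairs
  rw [hpairs, ← mul_right_inj' htot, mul_rg2_sum X hΩ' htot,
    sum_congr rfl fun i _ => mul_add _ _ _, sum_add_distrib, mul_add, mul_sum]
  congr 1
  · exact sum_congr rfl fun i _ => by field_simp
  · field_simp
end

section
/- Let G be the graph obtained from G' by subdividing each edge into n pieces, with vertices the junctions v_{0,1},…,v_{0,v'} and intermediate vertices v_{i,j} (i ∈ Fin e', j ∈ {1,…,n−1}), v = v' + (n−1)e' vertices in total. Let X be any assignment of positions in ℝ^d to the vertices of G, let X_i = (x_{i,1},…,x_{i,n−1}) be the point cloud of intermediate positions on edge i, and let X' = (x_{0,1},…,x_{0,v'}) be the point cloud of junction positions, all with unit weights. Then Rg²(X) = ((n−1)/v) Σ_{i=1}^{e'} Rg²(X_i) + (v'/v)·Rg²(X') + ((n−1)²/(2v²)) Σ_{i=1}^{e'} Σ_{j=1}^{e'} ‖μ(X_i) − μ(X_j)‖² + ((n−1)v'/v²) Σ_{i=1}^{e'} ‖μ(X_i) − μ(X')‖².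 -/
open Finset

/-! The squared radius of gyration of a cloud of `N` points is `1 / (2 N²)` times the sum of the
squared distances over all ordered pairs of points, and by the parallel axis theorem the sum of
squared distances between a cloud `X` of `a` points and a cloud `Y` of `b` points is
`a b (Rg²(X) + Rg²(Y) + ‖μ(X) - μ(Y)‖²)`. Sorting the pairs of vertices of the subdivision into
junction–junction, junction–edge and edge–edge pairs then gives the formula. -/

section PairDistSq

variable {A B : Type*} [Fintype A] [Fintype B] {d : ℕ}

noncomputable def pairDistSq (X : A → EuclideanSpace ℝ (Fin d))
    (Y : B → EuclideanSpace ℝ (Fin d)) : ℝ :=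
  ∑ a, ∑ b, ‖X a - Y b‖ ^ 2

lemma card_smul_uMu (X : A → EuclideanSpace ℝ (Fin d)) :
    (Fintype.card A : ℝ) • uMu X = ∑ a, X a := by
  rcases eq_or_ne (Fintype.card A) 0 with hA | hA
  · have := Fintype.card_eq_zero_iff.mp hA
    simp
  · rw [uMu, smul_smul, mul_inv_cancel₀ (Nat.cast_ne_zero.mpr hA), one_smul]

lemma card_mul_uRg2 (X : A → EuclideanSpace ℝ (Fin d)) :
    (Fintype.card A : ℝ) * uRg2 X = ∑ a, ‖X a‖ ^ 2 - Fintype.card A * ‖uMu X‖ ^ 2 := by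
  have hcross : ∑ a, inner ℝ (X a) (uMu X) = Fintype.card A * ‖uMu X‖ ^ 2 := by
    rw [← sum_inner, ← card_smul_uMu, real_inner_smul_left, real_inner_self_eq_norm_sq]
  rcases eq_or_ne (Fintype.card A) 0 with hA | hA
  · have := Fintype.card_eq_zero_iff.mp hA
    simp
  · rw [uRg2, ← mul_assoc, mul_inv_cancel₀ (Nat.cast_ne_zero.mpr hA), one_mul]
    simp only [norm_sub_sq_real, sum_add_distrib, sum_sub_distrib, ← mul_sum, hcross,
      sum_const, card_univ, nsmul_eq_mul]
    ring

lemma pairDistSq_eq_sum_norm_sq_sub_inner (X : A → EuclideanSpace ℝ (Fin d))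
    (Y : B → EuclideanSpace ℝ (Fin d)) :
    pairDistSq X Y = Fintype.card B * ∑ a, ‖X a‖ ^ 2 + Fintype.card A * ∑ b, ‖Y b‖ ^ 2
      - 2 * inner ℝ (∑ a, X a) (∑ b, Y b) := by
  simp only [pairDistSq, norm_sub_sq_real, sum_add_distrib, sum_sub_distrib, ← mul_sum,
    sum_const, card_univ, nsmul_eq_mul]
  rw [sum_inner]
  simp only [inner_sum]
  ring

lemma pairDistSq_eq_uRg2 (X : A → EuclideanSpace ℝ (Fin d))
    (Y : B → EuclideanSpace ℝ (Fin d)) :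
    pairDistSq X Y = Fintype.card A * Fintype.card B *
      (uRg2 X + uRg2 Y + ‖uMu X - uMu Y‖ ^ 2) := by
  have hX := card_mul_uRg2 X
  have hY := card_mul_uRg2 Y
  rw [pairDistSq_eq_sum_norm_sq_sub_inner, ← card_smul_uMu X, ← card_smul_uMu Y,
    real_inner_smul_left, real_inner_smul_right, norm_sub_sq_real]
  linear_combination -(Fintype.card B : ℝ) * hX - (Fintype.card A : ℝ) * hY

lemma two_mul_card_sq_mul_uRg2 (X : A → EuclideanSpace ℝ (Fin d)) :
    2 * (Fintype.card A : ℝ) ^ 2 * uRg2 X = pairDistSq X X := by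
  rw [pairDistSq_eq_uRg2, sub_self, norm_zero]
  ring

lemma pairDistSq_comm (X : A → EuclideanSpace ℝ (Fin d)) (Y : B → EuclideanSpace ℝ (Fin d)) :
    pairDistSq X Y = pairDistSq Y X := by
  rw [pairDistSq, sum_comm]
  simp only [pairDistSq, norm_sub_rev]

lemma pairDistSq_sum_self (X : A ⊕ B → EuclideanSpace ℝ (Fin d)) :
    pairDistSq X X = pairDistSq (X ∘ Sum.inl) (X ∘ Sum.inl)
      + 2 * pairDistSq (X ∘ Sum.inl) (X ∘ Sum.inr) + pairDistSq (X ∘ Sum.inr) (X ∘ Sum.inr) := by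
  have hcomm := pairDistSq_comm (X ∘ Sum.inl) (X ∘ Sum.inr)
  simp only [pairDistSq, Fintype.sum_sum_type, sum_add_distrib, Function.comp_apply] at hcomm ⊢
  linarith

lemma pairDistSq_prod_left {C : Type*} [Fintype C] (X : A × B → EuclideanSpace ℝ (Fin d))
    (Y : C → EuclideanSpace ℝ (Fin d)) :
    pairDistSq X Y = ∑ a, pairDistSq (fun b => X (a, b)) Y := by
  simp only [pairDistSq, Fintype.sum_prod_type]

lemma pairDistSq_prod_right {C : Type*} [Fintype C] (X : C → EuclideanSpace ℝ (Fin d))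
    (Y : A × B → EuclideanSpace ℝ (Fin d)) :
    pairDistSq X Y = ∑ a, pairDistSq X (fun b => Y (a, b)) := by
  rw [pairDistSq_comm, pairDistSq_prod_left]
  simp only [pairDistSq_comm X]

end PairDistSq

theorem rg2_subdivision_splitting_general {d n v' e' : ℕ}
    (hn : 2 ≤ n)
    (X : (Fin v' ⊕ Fin e' × Fin (n - 1)) → EuclideanSpace ℝ (Fin d)) :
    uRg2 X =
      (((n : ℝ) - 1) / ((v' : ℝ) + ((n : ℝ) - 1) * (e' : ℝ))) *
          (∑ i : Fin e', uRg2 (fun j : Fin (n - 1) => X (Sum.inr (i, j)))) +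
        ((v' : ℝ) / ((v' : ℝ) + ((n : ℝ) - 1) * (e' : ℝ))) *
          uRg2 (fun k : Fin v' => X (Sum.inl k)) +
        (((n : ℝ) - 1) ^ 2 / (2 * ((v' : ℝ) + ((n : ℝ) - 1) * (e' : ℝ)) ^ 2)) *
          (∑ i : Fin e', ∑ j : Fin e',
            ‖uMu (fun k : Fin (n - 1) => X (Sum.inr (i, k)))
              - uMu (fun k : Fin (n - 1) => X (Sum.inr (j, k)))‖ ^ 2) +
        (((n : ℝ) - 1) * (v' : ℝ) / ((v' : ℝ) + ((n : ℝ) - 1) * (e' : ℝ)) ^ 2) *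
          (∑ i : Fin e',
            ‖uMu (fun k : Fin (n - 1) => X (Sum.inr (i, k)))
              - uMu (fun k : Fin v' => X (Sum.inl k))‖ ^ 2) := by
  have hm : ((n - 1 : ℕ) : ℝ) = n - 1 := Nat.cast_pred (by omega)
  set N : ℝ := v' + (n - 1) * e'
  have hcard : (Fintype.card (Fin v' ⊕ Fin e' × Fin (n - 1)) : ℝ) = N := by
    simp only [Fintype.card_sum, Fintype.card_prod, Fintype.card_fin]
    push_cast [hm]
    ring
  have hpairs := two_mul_card_sq_mul_uRg2 X
  rw [pairDistSq_sum_self, pairDistSq_prod_right, pairDistSq_prod_left] at hpairs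
  simp only [pairDistSq_prod_right] at hpairs
  simp only [pairDistSq_eq_uRg2, Fintype.card_fin, hm, hcard, sub_self, norm_zero,
    Function.comp_def, mul_add, sum_add_distrib, ← mul_sum, sum_const, card_univ,
    nsmul_eq_mul, norm_sub_rev (uMu fun k => X (Sum.inl k))] at hpairs
  by_cases hN : N = 0
  · rw [uRg2, hcard, hN]
    simp
  · field_simp
    linear_combination hpairs

/-- Splitting formula for the squared radius of gyration of an embedding of the
subdivision graph `G` (junction vertices indexed by `Fin v'`, intermediate vertices
by `Fin e' × Fin (n−1)`), in terms of the intermediate clouds on each edge and the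
junction cloud. -/
theorem rg2_subdivision_splitting {d n v' e' : ℕ}
    (hd : 1 ≤ d) (hn : 2 ≤ n) (hv' : 1 ≤ v') (he' : 1 ≤ e')
    (X : (Fin v' ⊕ Fin e' × Fin (n - 1)) → EuclideanSpace ℝ (Fin d)) :
    uRg2 X =
      (((n : ℝ) - 1) / ((v' : ℝ) + ((n : ℝ) - 1) * (e' : ℝ))) *
          (∑ i : Fin e', uRg2 (fun j : Fin (n - 1) => X (Sum.inr (i, j)))) +
        ((v' : ℝ) / ((v' : ℝ) + ((n : ℝ) - 1) * (e' : ℝ))) *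
          uRg2 (fun k : Fin v' => X (Sum.inl k)) +
        (((n : ℝ) - 1) ^ 2 / (2 * ((v' : ℝ) + ((n : ℝ) - 1) * (e' : ℝ)) ^ 2)) *
          (∑ i : Fin e', ∑ j : Fin e',
            ‖uMu (fun k : Fin (n - 1) => X (Sum.inr (i, k)))
              - uMu (fun k : Fin (n - 1) => X (Sum.inr (j, k)))‖ ^ 2) +
        (((n : ℝ) - 1) * (v' : ℝ) / ((v' : ℝ) + ((n : ℝ) - 1) * (e' : ℝ)) ^ 2) *
          (∑ i : Fin e',
            ‖uMu (fun k : Fin (n - 1) => X (Sum.inr (i, k)))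
              - uMu (fun k : Fin v' => X (Sum.inl k))‖ ^ 2) :=
  rg2_subdivision_splitting_general hn X
end

section
/- With the subdivision setup below, for n ≥ 2 and each i ∈ Fin e': (a) the average over σ ∈ S of the center of mass μ(X^σ_i) of the intermediate point cloud X^σ_i equals m'_i = (X'(head i) + X'(tail i))/2; and (b) the average over all pairs (σ, j) with σ ∈ S and j ∈ {1,…,n−1} of the positions x^σ_{i,j} also equals m'_i. -/
open Finset

/-! For a fixed slot `k`, the displacement `w i (σ i k)` runs uniformly over the `n`
displacements of edge `i` as `σ` ranges over `S`, so its average is `(X' (head i) - X' (tl i)) / n`.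
Hence the `σ`-average of `x^σ_{i,j}` is the point at fraction `(j + 1) / n` along the edge, and
the average of `(j + 1) / n` over `j < n - 1` is `1 / 2`. Both claimed averages are this double
average, taken in the two orders. -/

section uMu

variable {d : ℕ} {V W : Type*} [Fintype V] [Fintype W]

lemma uMu_comp_equiv (e : W ≃ V) (X : V → EuclideanSpace ℝ (Fin d)) :
    uMu (X ∘ e) = uMu X := by
  unfold uMu
  rw [Fintype.card_congr e, Function.comp_def, Equiv.sum_comp e X]

lemma uMu_const [Nonempty V] (c : EuclideanSpace ℝ (Fin d)) :
    uMu (fun _ : V => c) = c := by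
  unfold uMu
  rw [sum_const, card_univ, ← Nat.cast_smul_eq_nsmul ℝ, smul_smul,
    inv_mul_cancel₀ (by positivity), one_smul]

lemma uMu_add (X Y : V → EuclideanSpace ℝ (Fin d)) :
    uMu (fun v => X v + Y v) = uMu X + uMu Y := by
  unfold uMu
  rw [sum_add_distrib, smul_add]

lemma uMu_sum {ι : Type*} (s : Finset ι) (X : ι → V → EuclideanSpace ℝ (Fin d)) :
    uMu (fun v => ∑ k ∈ s, X k v) = ∑ k ∈ s, uMu (X k) := by
  unfold uMu
  rw [sum_comm, smul_sum]

lemma uMu_smul_const (f : V → ℝ) (x : EuclideanSpace ℝ (Fin d)) :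
    uMu (fun v => f v • x) = ((Fintype.card V : ℝ)⁻¹ * ∑ v, f v) • x := by
  unfold uMu
  rw [← sum_smul, smul_smul]

lemma uMu_prod (X : V × W → EuclideanSpace ℝ (Fin d)) :
    uMu X = uMu (fun v => uMu (fun w => X (v, w))) := by
  unfold uMu
  rw [Fintype.card_prod, Fintype.sum_prod_type, ← smul_sum, smul_smul, Nat.cast_mul, mul_inv]

lemma uMu_comm (X : V → W → EuclideanSpace ℝ (Fin d)) :
    uMu (fun v => uMu (X v)) = uMu (fun w => uMu (fun v => X v w)) := by
  rw [← uMu_prod (fun p => X p.1 p.2), ← uMu_prod (fun p => X p.2 p.1),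
    ← uMu_comp_equiv (Equiv.prodComm W V)]
  rfl

end uMu

section RandomPermutation

variable {d : ℕ} {α : Type*} [Fintype α] [DecidableEq α]

lemma uMu_perm_apply_eq (f : α → EuclideanSpace ℝ (Fin d)) (a b : α) :
    uMu (fun π : Equiv.Perm α => f (π a)) = uMu (fun π : Equiv.Perm α => f (π b)) := by
  rw [← uMu_comp_equiv (Equiv.mulRight (Equiv.swap a b))]
  simp [Function.comp_def, Equiv.Perm.mul_apply]

lemma uMu_perm_apply (f : α → EuclideanSpace ℝ (Fin d)) (a : α) :
    uMu (fun π : Equiv.Perm α => f (π a)) = uMu f := by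
  have : Nonempty α := ⟨a⟩
  calc uMu (fun π : Equiv.Perm α => f (π a))
      = uMu (fun b => uMu (fun π : Equiv.Perm α => f (π b))) := by
        simp only [uMu_perm_apply_eq f _ a, uMu_const]
    _ = uMu (fun π : Equiv.Perm α => uMu (f ∘ π)) := uMu_comm _
    _ = uMu f := by simp only [uMu_comp_equiv, uMu_const]

lemma uMu_pi_perm_apply {ι : Type*} [Fintype ι] [DecidableEq ι]
    (f : α → EuclideanSpace ℝ (Fin d)) (i : ι) (a : α) :
    uMu (fun σ : ι → Equiv.Perm α => f (σ i a)) = uMu f := by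
  rw [← uMu_comp_equiv (Equiv.funSplitAt i (Equiv.Perm α)).symm, uMu_prod]
  simpa [Function.comp_def, uMu_const] using uMu_perm_apply f a

end RandomPermutation

lemma card_filter_val_le {n : ℕ} (j : ℕ) (hj : j < n) :
    #{k : Fin n | (k : ℕ) ≤ j} = j + 1 := by
  rw [show ({k : Fin n | (k : ℕ) ≤ j} : Finset (Fin n)) = Iic ⟨j, hj⟩ by
    ext k; simp [Fin.le_def], Fin.card_Iic]

lemma sum_fin_val_add_one (m : ℕ) : ∑ j : Fin m, ((j : ℝ) + 1) = m * (m + 1) / 2 := by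
  rw [Fin.sum_univ_eq_sum_range (fun j => (j : ℝ) + 1)]
  induction m with
  | zero => simp
  | succ m ih => rw [sum_range_succ, ih]; push_cast; ring

lemma uMu_xpos_over_perms {d n v' e' : ℕ} (head tl : Fin e' → Fin v')
    (X' : Fin v' → EuclideanSpace ℝ (Fin d)) (w : Fin e' → Fin n → EuclideanSpace ℝ (Fin d))
    (i : Fin e') (hw : ∑ k, w i k = X' (head i) - X' (tl i)) (j : Fin (n - 1)) :
    uMu (fun σ : Fin e' → Equiv.Perm (Fin n) => xpos X' tl w σ i j)
      = X' (tl i) + (((j : ℝ) + 1) / n) • (X' (head i) - X' (tl i)) := by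
  have hw_mean : uMu (w i) = (n : ℝ)⁻¹ • (X' (head i) - X' (tl i)) := by
    rw [uMu, Fintype.card_fin, hw]
  simp only [xpos, ← sum_filter]
  rw [uMu_add (fun _ => X' (tl i)), uMu_const, uMu_sum]
  simp only [uMu_pi_perm_apply, hw_mean, sum_const,
    card_filter_val_le _ (j.2.trans_le (n.sub_le 1))]
  module

lemma uMu_add_succ_div_smul {d n : ℕ} (hn : 2 ≤ n) (c v : EuclideanSpace ℝ (Fin d)) :
    uMu (fun j : Fin (n - 1) => c + (((j : ℝ) + 1) / n) • v) = c + (2 : ℝ)⁻¹ • v := by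
  have : Nonempty (Fin (n - 1)) := ⟨⟨0, by omega⟩⟩
  rw [uMu_add (fun _ => c), uMu_const, uMu_smul_const, ← sum_div, sum_fin_val_add_one,
    Fintype.card_fin, Nat.cast_sub (by omega : 1 ≤ n), Nat.cast_one, sub_add_cancel]
  have hn2 : (2 : ℝ) ≤ n := by exact_mod_cast hn
  have hn0 : (n : ℝ) ≠ 0 := by linarith
  have hn1 : (n : ℝ) - 1 ≠ 0 := by linarith
  congr 2
  field_simp

theorem average_center_of_mass_is_midpoint_general {d n v' e' : ℕ} (hn : 2 ≤ n)
    (head tl : Fin e' → Fin v')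
    (X' : Fin v' → EuclideanSpace ℝ (Fin d))
    (w : Fin e' → Fin n → EuclideanSpace ℝ (Fin d))
    (hw : ∀ i, ∑ j, w i j = X' (head i) - X' (tl i))
    (i : Fin e') :
    uMu (fun σ : Fin e' → Equiv.Perm (Fin n) =>
        uMu (fun j : Fin (n - 1) => xpos X' tl w σ i j))
      = (2 : ℝ)⁻¹ • (X' (head i) + X' (tl i)) ∧
    uMu (fun p : Fin (n - 1) × (Fin e' → Equiv.Perm (Fin n)) =>
        xpos X' tl w p.2 i p.1)
      = (2 : ℝ)⁻¹ • (X' (head i) + X' (tl i)) := by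
  have hmean : uMu (fun j : Fin (n - 1) => uMu (fun σ : Fin e' → Equiv.Perm (Fin n) =>
      xpos X' tl w σ i j)) = (2 : ℝ)⁻¹ • (X' (head i) + X' (tl i)) := by
    simp only [uMu_xpos_over_perms head tl X' w i (hw i), uMu_add_succ_div_smul hn]
    module
  exact ⟨(uMu_comm _).trans hmean, (uMu_prod _).trans hmean⟩

/-- (a) The average over `σ ∈ S` of the centers of mass `μ(X^σ_i)` of the intermediate
clouds equals the edge midpoint `m'ᵢ = (X'(head i) + X'(tail i))/2`; (b) the average
over all pairs `(σ, j)` of the positions `x^σ_{i,j}` also equals `m'ᵢ`. -/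
theorem average_center_of_mass_is_midpoint {d n v' e' : ℕ} (hd : 1 ≤ d) (hn : 2 ≤ n)
    (head tl : Fin e' → Fin v')
    (X' : Fin v' → EuclideanSpace ℝ (Fin d))
    (w : Fin e' → Fin n → EuclideanSpace ℝ (Fin d))
    (hw : ∀ i, ∑ j, w i j = X' (head i) - X' (tl i))
    (i : Fin e') :
    uMu (fun σ : Fin e' → Equiv.Perm (Fin n) =>
        uMu (fun j : Fin (n - 1) => xpos X' tl w σ i j))
      = (2 : ℝ)⁻¹ • (X' (head i) + X' (tl i)) ∧
    uMu (fun p : Fin (n - 1) × (Fin e' → Equiv.Perm (Fin n)) =>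
        xpos X' tl w p.2 i p.1)
      = (2 : ℝ)⁻¹ • (X' (head i) + X' (tl i)) :=
  average_center_of_mass_is_midpoint_general hn head tl X' w hw i
end

section
/- With the subdivision setup below, for n ≥ 2 and any two distinct indices i ≠ j in Fin e', the average over σ ∈ S of the squared distance between the centers of mass of the intermediate clouds on edges i and j satisfies (1/#S) Σ_{σ∈S} ‖μ(X^σ_i) − μ(X^σ_j)‖² = ‖m'_i − m'_j‖² + (n²(n+1)/(12(n−1)²))·(Rg²(W_i) + Rg²(W_j)), where m'_i = (X'(head i) + X'(tail i))/2 and W_i = (w(i,1),…,w(i,n)) is a point cloud with unit weights. -/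
open Finset

/-!
Write `m'ᵢ = (X'(head i) + X'(tail i))/2`. The centroid of the `n - 1` intermediate vertices on
edge `i` is `X'(tail i) + ∑ₖ (n-1-k)/(n-1) · w(i, σᵢ k)`; since the displacements sum to
`X'(head i) - X'(tail i)`, this is `m'ᵢ + Aᵢ(σᵢ)` with `Aᵢ(τ) = ∑ₖ aₖ · w(i, τ k)` for centred
weights `aₖ` (`∑ aₖ = 0`, `∑ aₖ² = n(n+1)/(12(n-1))`). As `σᵢ` and `σⱼ` are independent and
uniform, and `Aᵢ` averages to zero over `Sₙ`, the cross terms of `‖m'ᵢ - m'ⱼ + Aᵢ - Aⱼ‖²` vanish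
on average. The remaining `𝔼 ‖Aᵢ‖²` is a sampling-without-replacement variance: for a centred
cloud `g`, the covariance `𝔼_τ ⟪g(τ k), g(τ l)⟫` is `𝔼 ‖g‖²` on the diagonal and
`-𝔼 ‖g‖²/(n-1)` off it, so `𝔼 ‖Aᵢ‖² = n/(n-1) · ∑ aₖ² · Rg²(Wᵢ)`.
-/

open scoped BigOperators RealInnerProductSpace

section PermutationAverages

variable {α M : Type*} [Fintype α] [DecidableEq α] [AddCommMonoid M] [Module ℚ≥0 M]

theorem expect_perm_mul_right (F : Equiv.Perm α → M) (π : Equiv.Perm α) :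
    𝔼 τ, F (τ * π) = 𝔼 τ, F τ :=
  Fintype.expect_equiv (Equiv.mulRight π) _ _ fun _ => rfl

theorem expect_perm_apply (f : α → M) (k : α) :
    𝔼 τ : Equiv.Perm α, f (τ k) = 𝔼 m, f m := by
  have : Nonempty α := ⟨k⟩
  have hk : ∀ k', 𝔼 τ : Equiv.Perm α, f (τ k') = 𝔼 τ : Equiv.Perm α, f (τ k) := fun k' => by
    rw [← expect_perm_mul_right _ (Equiv.swap k k')]
    simp [Equiv.Perm.mul_apply]
  calc 𝔼 τ : Equiv.Perm α, f (τ k) = 𝔼 k', 𝔼 τ : Equiv.Perm α, f (τ k') := by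
        simp only [hk, Fintype.expect_const]
    _ = 𝔼 τ : Equiv.Perm α, 𝔼 k', f (τ k') := expect_comm ..
    _ = 𝔼 _τ : Equiv.Perm α, 𝔼 m, f m :=
        expect_congr rfl fun τ _ => Fintype.expect_equiv τ _ f fun _ => rfl
    _ = 𝔼 m, f m := Fintype.expect_const _

theorem expect_perm_apply_apply_eq (g : α → α → M) {k l l' : α} (hl : l ≠ k) (hl' : l' ≠ k) :
    𝔼 τ : Equiv.Perm α, g (τ k) (τ l) = 𝔼 τ : Equiv.Perm α, g (τ k) (τ l') := by
  rw [← expect_perm_mul_right _ (Equiv.swap l l')]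
  simp [Equiv.Perm.mul_apply, Equiv.swap_apply_of_ne_of_ne hl.symm hl'.symm]

end PermutationAverages

theorem sum_perm_sum_smul_eq_zero {α R M : Type*} [Fintype α] [DecidableEq α] [Semiring R]
    [AddCommMonoid M] [Module R M] {a : α → R} (ha : ∑ k, a k = 0) (f : α → M) :
    ∑ τ : Equiv.Perm α, ∑ k, a k • f (τ k) = 0 := by
  rw [sum_comm]
  simp_rw [← smul_sum]
  rcases isEmpty_or_nonempty α with hα | ⟨⟨k₀⟩⟩
  · simp
  have hk : ∀ k, ∑ τ : Equiv.Perm α, f (τ k) = ∑ τ : Equiv.Perm α, f (τ k₀) := fun k => by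
    rw [← Equiv.sum_comp (Equiv.mulRight (Equiv.swap k₀ k))]
    simp [Equiv.Perm.mul_apply]
  simp_rw [hk, ← sum_smul, ha, zero_smul]

section IndependentCoordinates

variable {ι β M : Type*} [Fintype ι] [DecidableEq ι] [Fintype β] [Nonempty β]
  [AddCommMonoid M] [Module ℚ≥0 M]

theorem Fintype.expect_pi_apply (f : β → M) (i : ι) : 𝔼 σ : ι → β, f (σ i) = 𝔼 b, f b := by
  rw [Fintype.expect_equiv (Equiv.funSplitAt i β) (fun σ => f (σ i)) (fun p => f p.1)
      fun _ => rfl,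
    ← univ_product_univ, expect_product' univ univ fun b _ => f b]
  simp only [Fintype.expect_const]

theorem Fintype.expect_pi_apply_apply {i j : ι} (hij : i ≠ j) (F : β → β → M) :
    𝔼 σ : ι → β, F (σ i) (σ j) = 𝔼 a, 𝔼 b, F a b := by
  rw [Fintype.expect_equiv (Equiv.funSplitAt i β) (fun σ => F (σ i) (σ j))
      (fun p => F p.1 (p.2 ⟨j, hij.symm⟩)) fun _ => rfl,
    ← univ_product_univ,
    expect_product' univ univ fun a (r : {k // k ≠ i} → β) => F a (r ⟨j, hij.symm⟩)]
  simp only [Fintype.expect_pi_apply]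

end IndependentCoordinates

section PermutationCovariance

variable {α E : Type*} [Fintype α] [DecidableEq α] [NormedAddCommGroup E] [InnerProductSpace ℝ E]

theorem card_sub_one_mul_expect_perm_inner {g : α → E} (hg : ∑ m, g m = 0) {k l : α}
    (hl : l ≠ k) :
    ((Fintype.card α : ℝ) - 1) * 𝔼 τ : Equiv.Perm α, ⟪g (τ k), g (τ l)⟫
      = -𝔼 m, ‖g m‖ ^ 2 := by
  have : Nonempty α := ⟨k⟩
  -- A row of the covariance matrix sums to zero, and its off-diagonal entries all agree.
  have hsum : ∑ l', 𝔼 τ : Equiv.Perm α, ⟪g (τ k), g (τ l')⟫ = 0 := by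
    simp_rw [← expect_sum_comm, ← inner_sum, Equiv.sum_comp _ g, hg, inner_zero_right,
      expect_const_zero]
  have hoff : ∀ l' ∈ univ.erase k, 𝔼 τ : Equiv.Perm α, ⟪g (τ k), g (τ l')⟫
      = 𝔼 τ : Equiv.Perm α, ⟪g (τ k), g (τ l)⟫ := fun l' hl' =>
    expect_perm_apply_apply_eq (fun x y => ⟪g x, g y⟫) (ne_of_mem_erase hl') hl
  rw [← add_sum_erase _ _ (mem_univ k), sum_congr rfl hoff, sum_const,
    card_erase_of_mem (mem_univ k), card_univ, nsmul_eq_mul,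
    Nat.cast_sub Fintype.card_pos, Nat.cast_one] at hsum
  simp_rw [real_inner_self_eq_norm_sq] at hsum
  rw [expect_perm_apply (fun x => ‖g x‖ ^ 2)] at hsum
  linarith

theorem expect_perm_norm_sq_sum_smul (hα : 1 < Fintype.card α) {a : α → ℝ}
    (ha : ∑ k, a k = 0) {g : α → E} (hg : ∑ m, g m = 0) :
    𝔼 τ : Equiv.Perm α, ‖∑ k, a k • g (τ k)‖ ^ 2
      = (Fintype.card α : ℝ) / (Fintype.card α - 1) * (∑ k, a k ^ 2) * 𝔼 m, ‖g m‖ ^ 2 := by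
  set N : ℝ := (Fintype.card α : ℝ)
  set V := 𝔼 m, ‖g m‖ ^ 2
  have hN : N - 1 ≠ 0 := by
    have : (1 : ℝ) < N := Nat.one_lt_cast.mpr hα
    linarith
  have hcov : ∀ k l, 𝔼 τ : Equiv.Perm α, ⟪g (τ k), g (τ l)⟫
      = N / (N - 1) * V * (if l = k then 1 else 0) - V / (N - 1) := by
    intro k l
    split_ifs with hl
    · subst hl
      simp_rw [real_inner_self_eq_norm_sq]
      rw [expect_perm_apply (fun x => ‖g x‖ ^ 2)]
      field_simp
      ring
    · have := card_sub_one_mul_expect_perm_inner hg hl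
      field_simp
      linarith
  calc 𝔼 τ : Equiv.Perm α, ‖∑ k, a k • g (τ k)‖ ^ 2
      = 𝔼 τ : Equiv.Perm α, ∑ k, ∑ l, a k * a l * ⟪g (τ k), g (τ l)⟫ := by
        simp_rw [← real_inner_self_eq_norm_sq, sum_inner, inner_sum, real_inner_smul_left,
          real_inner_smul_right, mul_assoc]
    _ = ∑ k, ∑ l, a k * a l * 𝔼 τ : Equiv.Perm α, ⟪g (τ k), g (τ l)⟫ := by
        simp_rw [expect_sum_comm, mul_expect]
    _ = N / (N - 1) * (∑ k, a k ^ 2) * V := by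
        simp only [hcov, mul_sub, mul_ite, mul_one, mul_zero, sum_sub_distrib, sum_ite_eq',
          mem_univ, if_true, ← sum_mul, ← mul_sum, ha, mul_zero, zero_mul, sub_zero, sq]
        ring

theorem expect_norm_add_sq {T : Type*} [Fintype T] [Nonempty T] (D : E) {X : T → E}
    (hX : ∑ t, X t = 0) :
    𝔼 t, ‖D + X t‖ ^ 2 = ‖D‖ ^ 2 + 𝔼 t, ‖X t‖ ^ 2 := by
  have hcross : 𝔼 t, 2 * ⟪D, X t⟫ = 0 := by
    rw [Fintype.expect_eq_sum_div_card, ← mul_sum, ← inner_sum, hX, inner_zero_right, mul_zero,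
      zero_div]
  simp_rw [norm_add_sq_real, expect_add_distrib, hcross, Fintype.expect_const, add_zero]

end PermutationCovariance

section UnitWeights

variable {V : Type*} [Fintype V] {d : ℕ}

theorem sum_sub_uMu_eq_zero [Nonempty V] (X : V → EuclideanSpace ℝ (Fin d)) :
    ∑ v, (X v - uMu X) = 0 := by
  rw [sum_sub_distrib, sum_const, card_univ, uMu, ← Nat.cast_smul_eq_nsmul ℝ, smul_smul,
    mul_inv_cancel₀ (Nat.cast_ne_zero.mpr Fintype.card_ne_zero), one_smul, sub_self]

theorem uRg2_eq_expect (X : V → EuclideanSpace ℝ (Fin d)) :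
    uRg2 X = 𝔼 v, ‖X v - uMu X‖ ^ 2 := by
  rw [uRg2, Fintype.expect_eq_sum_div_card, inv_mul_eq_div]

theorem expect_perm_norm_sq_sum_smul_eq_uRg2 [DecidableEq V] (hV : 1 < Fintype.card V)
    {a : V → ℝ} (ha : ∑ k, a k = 0) (X : V → EuclideanSpace ℝ (Fin d)) :
    𝔼 τ : Equiv.Perm V, ‖∑ k, a k • X (τ k)‖ ^ 2
      = (Fintype.card V : ℝ) / (Fintype.card V - 1) * (∑ k, a k ^ 2) * uRg2 X := by
  have : Nonempty V := Fintype.card_pos_iff.mp (by omega)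
  have hcenter : ∀ τ : Equiv.Perm V,
      ∑ k, a k • X (τ k) = ∑ k, a k • (X (τ k) - uMu X) := fun τ => by
    simp_rw [smul_sub, sum_sub_distrib, ← sum_smul, ha, zero_smul, sub_zero]
  rw [uRg2_eq_expect]
  simp only [hcenter]
  exact expect_perm_norm_sq_sum_smul (g := fun v => X v - uMu X) hV ha (sum_sub_uMu_eq_zero X)

end UnitWeights

theorem sum_range_sub_two_mul (x : ℝ) (N : ℕ) :
    ∑ k ∈ range N, (x - 2 * k) = N * (x - (N - 1)) := by
  induction N with
  | zero => simp
  | succ N ih => rw [sum_range_succ, ih]; push_cast; ring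

theorem sum_range_sub_two_mul_sq (x : ℝ) (N : ℕ) :
    ∑ k ∈ range N, (x - 2 * k) ^ 2 = N * ((x - (N - 1)) ^ 2 + ((N : ℝ) ^ 2 - 1) / 3) := by
  induction N with
  | zero => simp
  | succ N ih => rw [sum_range_succ, ih]; push_cast; ring

/-- The coefficient `(n - 1 - k) / (n - 1)` of the `k`-th displacement in the centroid of the
intermediate vertices, centred by subtracting its mean `1 / 2`. -/
noncomputable def subdivWeight (n : ℕ) (k : Fin n) : ℝ :=
  ((n : ℝ) - 1 - 2 * k) / (2 * ((n : ℝ) - 1))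

theorem sum_subdivWeight (n : ℕ) : ∑ k, subdivWeight n k = 0 := by
  simp_rw [subdivWeight, ← sum_div]
  rw [Fin.sum_univ_eq_sum_range (fun k => (n : ℝ) - 1 - 2 * k), sum_range_sub_two_mul]
  simp

theorem sum_subdivWeight_sq {n : ℕ} (hn : 2 ≤ n) :
    ∑ k, subdivWeight n k ^ 2 = n * (n + 1) / (12 * (n - 1)) := by
  have hn1 : (n : ℝ) - 1 ≠ 0 := sub_ne_zero.mpr (by exact_mod_cast (by omega : n ≠ 1))
  simp_rw [subdivWeight, div_pow, ← sum_div]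
  rw [Fin.sum_univ_eq_sum_range (fun k => ((n : ℝ) - 1 - 2 * k) ^ 2), sum_range_sub_two_mul_sq]
  field_simp
  ring

theorem Fin.card_filter_le_val (N k : ℕ) : #{j : Fin N | k ≤ (j : ℕ)} = N - k := by
  have := card_filter_add_card_filter_not (s := (univ : Finset (Fin N))) (fun j => (j : ℕ) < k)
  simp only [not_lt, card_univ, Fintype.card_fin, Fin.card_filter_val_lt] at this
  omega

section Subdivision

variable {d n v' e' : ℕ} (X' : Fin v' → EuclideanSpace ℝ (Fin d)) (tl : Fin e' → Fin v')
  (w : Fin e' → Fin n → EuclideanSpace ℝ (Fin d)) (σ : Fin e' → Equiv.Perm (Fin n)) (i : Fin e')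

theorem sum_xpos :
    ∑ j, xpos X' tl w σ i j = (n - 1) • X' (tl i) + ∑ k : Fin n, (n - 1 - k) • w i (σ i k) := by
  simp only [xpos, sum_add_distrib, sum_const, card_univ, Fintype.card_fin]
  rw [sum_comm]
  simp_rw [← sum_filter, sum_const, Fin.card_filter_le_val]

theorem uMu_xpos {head : Fin e' → Fin v'} (hn : 2 ≤ n)
    (hw : ∑ k, w i k = X' (head i) - X' (tl i)) :
    uMu (fun j => xpos X' tl w σ i j)
      = (2 : ℝ)⁻¹ • (X' (head i) + X' (tl i)) + ∑ k, subdivWeight n k • w i (σ i k) := by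
  have hn1 : (n : ℝ) - 1 ≠ 0 := sub_ne_zero.mpr (by exact_mod_cast (by omega : n ≠ 1))
  have hcoef : ∀ k : Fin n,
      ((n - 1 - k : ℕ) : ℝ) = ((n : ℝ) - 1) * (subdivWeight n k + 2⁻¹) := by
    intro k
    rw [subdivWeight, Nat.cast_sub (by omega), Nat.cast_sub (by omega)]
    field_simp
    ring
  have hhalf : ∑ k, (2 : ℝ)⁻¹ • w i (σ i k) = (2 : ℝ)⁻¹ • (X' (head i) - X' (tl i)) := by
    rw [← smul_sum, Equiv.sum_comp (σ i) (w i), hw]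
  rw [uMu, Fintype.card_fin, sum_xpos]
  simp_rw [← Nat.cast_smul_eq_nsmul ℝ, hcoef, Nat.cast_sub (by omega : 1 ≤ n), Nat.cast_one,
    mul_smul, ← smul_sum, ← smul_add, smul_smul, inv_mul_cancel₀ hn1, one_smul, add_smul,
    sum_add_distrib, hhalf]
  module

end Subdivision

theorem average_sq_dist_centers_of_mass_general {d n v' e' : ℕ} (hn : 2 ≤ n)
    (head tl : Fin e' → Fin v')
    (X' : Fin v' → EuclideanSpace ℝ (Fin d))
    (w : Fin e' → Fin n → EuclideanSpace ℝ (Fin d))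
    (hw : ∀ i, ∑ j, w i j = X' (head i) - X' (tl i))
    (i j : Fin e') (hij : i ≠ j) :
    (Fintype.card (Fin e' → Equiv.Perm (Fin n)) : ℝ)⁻¹ *
        ∑ σ : Fin e' → Equiv.Perm (Fin n),
          ‖uMu (fun k : Fin (n - 1) => xpos X' tl w σ i k)
            - uMu (fun k : Fin (n - 1) => xpos X' tl w σ j k)‖ ^ 2
      = ‖(2 : ℝ)⁻¹ • (X' (head i) + X' (tl i))
            - (2 : ℝ)⁻¹ • (X' (head j) + X' (tl j))‖ ^ 2
        + ((n : ℝ) ^ 2 * ((n : ℝ) + 1) / (12 * ((n : ℝ) - 1) ^ 2)) *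
            (uRg2 (w i) + uRg2 (w j)) := by
  set m := fun e => (2 : ℝ)⁻¹ • (X' (head e) + X' (tl e))
  set A := fun e (τ : Equiv.Perm (Fin n)) => ∑ k, subdivWeight n k • w e (τ k)
  have hA : ∀ e, ∑ τ, A e τ = 0 := fun e => sum_perm_sum_smul_eq_zero (sum_subdivWeight n) _
  have hvar : ∀ e, 𝔼 τ, ‖A e τ‖ ^ 2
      = (n : ℝ) ^ 2 * (n + 1) / (12 * (n - 1) ^ 2) * uRg2 (w e) := fun e => by
    have hn1 : (n : ℝ) - 1 ≠ 0 := sub_ne_zero.mpr (by exact_mod_cast (by omega : n ≠ 1))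
    have hcard : 1 < Fintype.card (Fin n) := by rw [Fintype.card_fin]; omega
    rw [expect_perm_norm_sq_sum_smul_eq_uRg2 hcard (sum_subdivWeight n), sum_subdivWeight_sq hn,
      Fintype.card_fin]
    field_simp
  calc _ = 𝔼 σ : Fin e' → Equiv.Perm (Fin n), ‖(m i - m j + A i (σ i)) + -A j (σ j)‖ ^ 2 := by
        rw [inv_mul_eq_div, ← Fintype.expect_eq_sum_div_card]
        simp_rw [uMu_xpos X' tl w _ _ hn (hw _)]
        congr! 3
        abel
    _ = 𝔼 τ, 𝔼 τ', ‖(m i - m j + A i τ) + -A j τ'‖ ^ 2 :=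
        Fintype.expect_pi_apply_apply hij fun τ τ' => ‖(m i - m j + A i τ) + -A j τ'‖ ^ 2
    _ = ‖m i - m j‖ ^ 2 + 𝔼 τ, ‖A i τ‖ ^ 2 + 𝔼 τ, ‖A j τ‖ ^ 2 := by
        have hnegA : ∑ τ, -A j τ = 0 := by rw [sum_neg_distrib, hA, neg_zero]
        simp_rw [expect_norm_add_sq _ hnegA, norm_neg, expect_add_distrib, Fintype.expect_const,
          expect_norm_add_sq _ (hA i)]
    _ = _ := by rw [hvar, hvar]; ring

/-- For distinct edges `i ≠ j`, the average over `σ ∈ S` of the squared distance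
between the centers of mass of the intermediate clouds on edges `i` and `j` equals
`‖m'ᵢ − m'ⱼ‖² + (n²(n+1)/(12(n−1)²))·(Rg²(Wᵢ) + Rg²(Wⱼ))`. -/
theorem average_sq_dist_centers_of_mass {d n v' e' : ℕ} (hd : 1 ≤ d) (hn : 2 ≤ n)
    (he' : 2 ≤ e') (head tl : Fin e' → Fin v')
    (X' : Fin v' → EuclideanSpace ℝ (Fin d))
    (w : Fin e' → Fin n → EuclideanSpace ℝ (Fin d))
    (hw : ∀ i, ∑ j, w i j = X' (head i) - X' (tl i))
    (i j : Fin e') (hij : i ≠ j) :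
    (Fintype.card (Fin e' → Equiv.Perm (Fin n)) : ℝ)⁻¹ *
        ∑ σ : Fin e' → Equiv.Perm (Fin n),
          ‖uMu (fun k : Fin (n - 1) => xpos X' tl w σ i k)
            - uMu (fun k : Fin (n - 1) => xpos X' tl w σ j k)‖ ^ 2
      = ‖(2 : ℝ)⁻¹ • (X' (head i) + X' (tl i))
            - (2 : ℝ)⁻¹ • (X' (head j) + X' (tl j))‖ ^ 2
        + ((n : ℝ) ^ 2 * ((n : ℝ) + 1) / (12 * ((n : ℝ) - 1) ^ 2)) *
            (uRg2 (w i) + uRg2 (w j)) :=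
  average_sq_dist_centers_of_mass_general hn head tl X' w hw i j hij
end

section
/- With the subdivision setup below, for n ≥ 2 and each i ∈ Fin e', the parent cloud P_i indexed by pairs (j,σ) ∈ {1,…,n−1} × S with position P_i(j,σ) = x^σ_{i,j} (unit weights) satisfies Rg²(P_i) = (n(n+1)/(6(n−1)))·Rg²(W_i) + ((n−2)/(12n))·‖w'_i‖², where W_i = (w(i,1),…,w(i,n)) is a point cloud with unit weights and w'_i = X'(head i) − X'(tail i). -/
open Finset RealInnerProductSpace

section AuxLemmas
open Finset RealInnerProductSpace RealInnerProductSpace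
variable {V : Type*} [Fintype V] {d : ℕ}

lemma uMu_translate [Nonempty V] (c : EuclideanSpace ℝ (Fin d)) (X : V → EuclideanSpace ℝ (Fin d)) :
    uMu (fun v => c + X v) = c + uMu X := by
  have hc : (Fintype.card V : ℝ) ≠ 0 := Nat.cast_ne_zero.2 Fintype.card_ne_zero
  unfold uMu
  rw [Finset.sum_add_distrib, Finset.sum_const, Finset.card_univ, smul_add,
    ← Nat.cast_smul_eq_nsmul ℝ, smul_smul, inv_mul_cancel₀ hc, one_smul]

lemma uRg2_translate [Nonempty V] (c : EuclideanSpace ℝ (Fin d))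
    (X : V → EuclideanSpace ℝ (Fin d)) :
    uRg2 (fun v => c + X v) = uRg2 X := by
  unfold uRg2
  rw [uMu_translate]
  congr 1
  exact Finset.sum_congr rfl fun v _ => by rw [add_sub_add_left_eq_sub]

lemma uRg2_eq [Nonempty V] (X : V → EuclideanSpace ℝ (Fin d)) :
    uRg2 X = (Fintype.card V : ℝ)⁻¹ * ∑ v, ‖X v‖ ^ 2 - ‖uMu X‖ ^ 2 := by
  have hc : (Fintype.card V : ℝ) ≠ 0 := Nat.cast_ne_zero.2 Fintype.card_ne_zero
  have hsum : ∑ v : V, ⟪X v, uMu X⟫ = (Fintype.card V : ℝ) * ‖uMu X‖ ^ 2 := by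
    rw [← sum_inner]
    have : (∑ v : V, X v) = (Fintype.card V : ℝ) • uMu X := by
      rw [uMu, smul_smul, mul_inv_cancel₀ hc, one_smul]
    rw [this, real_inner_smul_left, real_inner_self_eq_norm_sq]
  unfold uRg2
  have hexp : ∀ v : V, ‖X v - uMu X‖ ^ 2 = ‖X v‖ ^ 2 - 2 * ⟪X v, uMu X⟫ + ‖uMu X‖ ^ 2 :=
    fun v => norm_sub_sq_real (X v) (uMu X)
  rw [Finset.sum_congr rfl fun v _ => hexp v]
  rw [Finset.sum_add_distrib, Finset.sum_sub_distrib, ← Finset.mul_sum, hsum,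
    Finset.sum_const, Finset.card_univ, nsmul_eq_mul]
  field_simp
  ring
end AuxLemmas

section Perm
variable {n : ℕ} {M : Type*} [AddCommMonoid M]

lemma sum_perm_comp (f : Equiv.Perm (Fin n) → M) (e : Equiv.Perm (Fin n)) :
    ∑ π : Equiv.Perm (Fin n), f (π * e) = ∑ π : Equiv.Perm (Fin n), f π :=
  Equiv.sum_comp (Equiv.mulRight e) f

lemma sum_perm_apply_const (f : Fin n → M) (k k' : Fin n) :
    ∑ π : Equiv.Perm (Fin n), f (π k) = ∑ π : Equiv.Perm (Fin n), f (π k') := by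
  have := sum_perm_comp (fun π => f (π k')) (Equiv.swap k' k)
  simpa [Equiv.Perm.mul_apply, Equiv.swap_apply_left] using this

lemma nsmul_sum_perm_apply (f : Fin n → M) (k : Fin n) :
    n • ∑ π : Equiv.Perm (Fin n), f (π k)
      = (Fintype.card (Equiv.Perm (Fin n))) • ∑ a, f a := by
  calc n • ∑ π : Equiv.Perm (Fin n), f (π k)
      = ∑ k' : Fin n, ∑ π : Equiv.Perm (Fin n), f (π k') := by
        rw [Finset.sum_congr rfl fun k' _ => sum_perm_apply_const f k' k,
          Finset.sum_const, Finset.card_univ, Fintype.card_fin]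
    _ = ∑ π : Equiv.Perm (Fin n), ∑ k' : Fin n, f (π k') := Finset.sum_comm
    _ = ∑ _π : Equiv.Perm (Fin n), ∑ a, f a :=
        Finset.sum_congr rfl fun π _ => Equiv.sum_comp π f
    _ = _ := by rw [Finset.sum_const, Finset.card_univ]

lemma exists_perm_pair {k l k' l' : Fin n} (h : k ≠ l) (h' : k' ≠ l') :
    ∃ e : Equiv.Perm (Fin n), e k' = k ∧ e l' = l := by
  set s := Equiv.swap k' k with hs
  have hsl : s l ≠ k' := by
    have : s l ≠ s k := fun hh => h.symm (s.injective hh)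
    simpa [hs, Equiv.swap_apply_right] using this
  refine ⟨(Equiv.swap l' (s l)).trans s, ?_, ?_⟩
  · rw [Equiv.trans_apply, Equiv.swap_apply_of_ne_of_ne h' (hsl.symm)]
    exact Equiv.swap_apply_left k' k
  · rw [Equiv.trans_apply, Equiv.swap_apply_left]
    exact Equiv.swap_apply_self k' k l

lemma sum_perm_pair_const (f : Fin n → Fin n → M)
    {k l k' l' : Fin n} (h : k ≠ l) (h' : k' ≠ l') :
    ∑ π : Equiv.Perm (Fin n), f (π k) (π l) = ∑ π : Equiv.Perm (Fin n), f (π k') (π l') := by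
  obtain ⟨e, hk, hl⟩ := exists_perm_pair h h'
  have := sum_perm_comp (fun π => f (π k') (π l')) e
  simpa [Equiv.Perm.mul_apply, hk, hl] using this

end Perm

section PermAvg
variable {n d : ℕ}

lemma sum_perm_vec (hn : 0 < n) (ω : Fin n → EuclideanSpace ℝ (Fin d)) (k : Fin n) :
    ∑ π : Equiv.Perm (Fin n), ω (π k)
      = ((Fintype.card (Equiv.Perm (Fin n)) : ℝ) / n) • ∑ a, ω a := by
  have h := nsmul_sum_perm_apply ω k
  rw [← Nat.cast_smul_eq_nsmul ℝ, ← Nat.cast_smul_eq_nsmul ℝ] at h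
  have hn' : (n : ℝ) ≠ 0 := Nat.cast_ne_zero.2 hn.ne'
  rw [eq_comm, div_eq_mul_inv, mul_comm, mul_smul, ← h, smul_smul, inv_mul_cancel₀ hn', one_smul]

lemma sum_perm_diag (hn : 0 < n) (ω : Fin n → EuclideanSpace ℝ (Fin d)) (k : Fin n) :
    ∑ π : Equiv.Perm (Fin n), ‖ω (π k)‖ ^ 2
      = ((Fintype.card (Equiv.Perm (Fin n)) : ℝ) / n) * ∑ a, ‖ω a‖ ^ 2 := by
  have h := nsmul_sum_perm_apply (fun a => ‖ω a‖ ^ 2) k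
  rw [nsmul_eq_mul, nsmul_eq_mul] at h
  have hn' : (n : ℝ) ≠ 0 := Nat.cast_ne_zero.2 hn.ne'
  field_simp at h ⊢
  linarith [h]

lemma sum_perm_offdiag (hn : 2 ≤ n) (ω : Fin n → EuclideanSpace ℝ (Fin d))
    {k l : Fin n} (hkl : k ≠ l) :
    ∑ π : Equiv.Perm (Fin n), ⟪ω (π k), ω (π l)⟫
      = ((Fintype.card (Equiv.Perm (Fin n)) : ℝ) / (n * (n - 1)))
        * (‖∑ a, ω a‖ ^ 2 - ∑ a, ‖ω a‖ ^ 2) := by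
  set K := Fintype.card (Equiv.Perm (Fin n)) with hK
  set G : ℝ := ∑ π : Equiv.Perm (Fin n), ⟪ω (π k), ω (π l)⟫ with hG
  have step1 : ∑ k' : Fin n, ∑ l' : Fin n,
      (∑ π : Equiv.Perm (Fin n), ⟪ω (π k'), ω (π l')⟫) = (K : ℝ) * ‖∑ a, ω a‖ ^ 2 := by
    have : ∀ π : Equiv.Perm (Fin n), ∑ k' : Fin n, ∑ l' : Fin n, ⟪ω (π k'), ω (π l')⟫
        = ‖∑ a, ω a‖ ^ 2 := by
      intro π
      simp_rw [← inner_sum]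
      rw [← sum_inner, Equiv.sum_comp π ω, real_inner_self_eq_norm_sq]
    calc ∑ k' : Fin n, ∑ l' : Fin n, ∑ π : Equiv.Perm (Fin n), ⟪ω (π k'), ω (π l')⟫
        = ∑ k' : Fin n, ∑ π : Equiv.Perm (Fin n), ∑ l' : Fin n, ⟪ω (π k'), ω (π l')⟫ :=
          Finset.sum_congr rfl fun k' _ => Finset.sum_comm
      _ = ∑ π : Equiv.Perm (Fin n), ∑ k' : Fin n, ∑ l' : Fin n, ⟪ω (π k'), ω (π l')⟫ :=
          Finset.sum_comm
      _ = ∑ _π : Equiv.Perm (Fin n), ‖∑ a, ω a‖ ^ 2 := Finset.sum_congr rfl fun π _ => this π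
      _ = (K : ℝ) * ‖∑ a, ω a‖ ^ 2 := by rw [Finset.sum_const, Finset.card_univ, nsmul_eq_mul]
  have step2 : ∀ k' : Fin n, ∑ l' : Fin n,
      (∑ π : Equiv.Perm (Fin n), ⟪ω (π k'), ω (π l')⟫)
      = ((K : ℝ) / n) * ∑ a, ‖ω a‖ ^ 2 + ((n : ℝ) - 1) * G := by
    intro k'
    rw [← Finset.add_sum_erase _ _ (Finset.mem_univ k')]
    congr 1
    · have h := sum_perm_diag (by omega : 0 < n) ω k'
      simp only [real_inner_self_eq_norm_sq]
      exact h
    · have hconst : ∀ l' ∈ Finset.univ.erase k',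
          (∑ π : Equiv.Perm (Fin n), ⟪ω (π k'), ω (π l')⟫) = G := by
        intro l' hl'
        rw [hG]
        exact sum_perm_pair_const (fun a b => ⟪ω a, ω b⟫) (Finset.ne_of_mem_erase hl').symm hkl
      rw [Finset.sum_congr rfl hconst, Finset.sum_const, Finset.card_erase_of_mem (Finset.mem_univ k'),
        Finset.card_univ, Fintype.card_fin, nsmul_eq_mul, Nat.cast_sub (by omega : 1 ≤ n), Nat.cast_one]
  have key : (K : ℝ) * ‖∑ a, ω a‖ ^ 2
      = (n : ℝ) * (((K : ℝ) / n) * ∑ a, ‖ω a‖ ^ 2 + ((n : ℝ) - 1) * G) := by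
    rw [← step1, Finset.sum_congr rfl fun k' _ => step2 k', Finset.sum_const, Finset.card_univ,
      Fintype.card_fin, nsmul_eq_mul]
  have hn0 : (n : ℝ) ≠ 0 := Nat.cast_ne_zero.2 (by omega)
  have hn1 : (n : ℝ) - 1 ≠ 0 := by
    have : (2 : ℝ) ≤ n := by exact_mod_cast hn
    linarith
  field_simp at key ⊢
  linarith [key]

end PermAvg

section Reduce

lemma sum_eval {e' n : ℕ} {α : Type*} [Fintype α] {M : Type*} [AddCommMonoid M] (i : Fin e')
    (F : α × Equiv.Perm (Fin n) → M) :
    ∑ p : α × (Fin e' → Equiv.Perm (Fin n)), F (p.1, p.2 i)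
      = Fintype.card ({j : Fin e' // j ≠ i} → Equiv.Perm (Fin n))
          • ∑ q : α × Equiv.Perm (Fin n), F q := by
  have inner : ∀ j : α, ∑ σ : Fin e' → Equiv.Perm (Fin n), F (j, σ i)
      = Fintype.card ({j : Fin e' // j ≠ i} → Equiv.Perm (Fin n))
          • ∑ π : Equiv.Perm (Fin n), F (j, π) := by
    intro j
    have h1 := Equiv.sum_comp (Equiv.funSplitAt i (Equiv.Perm (Fin n)))
      (fun pr : Equiv.Perm (Fin n) × ({j : Fin e' // j ≠ i} → Equiv.Perm (Fin n)) => F (j, pr.1))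
    have h2 : ∀ σ : Fin e' → Equiv.Perm (Fin n),
        (Equiv.funSplitAt i (Equiv.Perm (Fin n)) σ).1 = σ i := fun _ => rfl
    simp only [h2] at h1
    rw [h1, Fintype.sum_prod_type]
    simp only [Finset.sum_const, Finset.card_univ]
    rw [← Finset.smul_sum]
  rw [Fintype.sum_prod_type, Fintype.sum_prod_type, Finset.smul_sum]
  exact Finset.sum_congr rfl fun j _ => inner j

lemma card_funPerm {e' n : ℕ} (i : Fin e') :
    Fintype.card (Fin e' → Equiv.Perm (Fin n))
      = Fintype.card (Equiv.Perm (Fin n))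
        * Fintype.card ({j : Fin e' // j ≠ i} → Equiv.Perm (Fin n)) := by
  rw [Fintype.card_congr (Equiv.funSplitAt i (Equiv.Perm (Fin n))), Fintype.card_prod]

lemma card_filter_le {n : ℕ} (jv : ℕ) (h : jv < n) :
    (Finset.univ.filter fun k : Fin n => (k : ℕ) ≤ jv).card = jv + 1 := by
  have : (Finset.univ.filter fun k : Fin n => (k : ℕ) ≤ jv) = Finset.Iic (⟨jv, h⟩ : Fin n) := by
    ext k
    simp [Fin.le_def]
  rw [this, Fin.card_Iic]

lemma sum_range_cast_add_one (m : ℕ) :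
    ∑ j ∈ Finset.range m, ((j : ℝ) + 1) = m * (m + 1) / 2 := by
  induction m with
  | zero => simp
  | succ m ih => rw [Finset.sum_range_succ, ih]; push_cast; ring

lemma sum_range_cast_mul (m : ℕ) :
    ∑ j ∈ Finset.range m, ((j : ℝ) + 1) * j = (m - 1) * m * (m + 1) / 3 := by
  induction m with
  | zero => simp
  | succ m ih => rw [Finset.sum_range_succ, ih]; push_cast; ring

end Reduce


/-- The parent cloud `Pᵢ : (j,σ) ↦ x^σ_{i,j}` (unit weights, indexed by
`{1,…,n−1} × S`) satisfies
`Rg²(Pᵢ) = (n(n+1)/(6(n−1)))·Rg²(Wᵢ) + ((n−2)/(12n))·‖w'ᵢ‖²`. -/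
theorem rg2_parent_cloud {d n v' e' : ℕ} (hd : 1 ≤ d) (hn : 2 ≤ n)
    (head tl : Fin e' → Fin v')
    (X' : Fin v' → EuclideanSpace ℝ (Fin d))
    (w : Fin e' → Fin n → EuclideanSpace ℝ (Fin d))
    (hw : ∀ i, ∑ j, w i j = X' (head i) - X' (tl i))
    (i : Fin e') :
    uRg2 (fun p : Fin (n - 1) × (Fin e' → Equiv.Perm (Fin n)) =>
        xpos X' tl w p.2 i p.1)
      = ((n : ℝ) * ((n : ℝ) + 1) / (6 * ((n : ℝ) - 1))) * uRg2 (w i)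
        + (((n : ℝ) - 2) / (12 * (n : ℝ))) * ‖X' (head i) - X' (tl i)‖ ^ 2 := by
  classical
  have hn1 : 0 < n - 1 := by omega
  haveI : Nonempty (Fin (n - 1)) := ⟨⟨0, hn1⟩⟩
  set K := Fintype.card (Equiv.Perm (Fin n)) with hK
  set C := Fintype.card ({j : Fin e' // j ≠ i} → Equiv.Perm (Fin n)) with hC
  set ω : Fin n → EuclideanSpace ℝ (Fin d) := w i with hωdef
  set Wv : EuclideanSpace ℝ (Fin d) := ∑ a, ω a with hWvdef
  have hWv' : X' (head i) - X' (tl i) = Wv := (hw i).symm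
  rw [hWv']
  set P2 : ℝ := ∑ a, ‖ω a‖ ^ 2 with hP2
  set S : Fin (n - 1) → Equiv.Perm (Fin n) → EuclideanSpace ℝ (Fin d) :=
    fun j π => ∑ k : Fin n, if (k : ℕ) ≤ (j : ℕ) then ω (π k) else 0 with hSdef
  have hnR : (n : ℝ) ≠ 0 := Nat.cast_ne_zero.2 (by omega)
  have hn2R : (2 : ℝ) ≤ (n : ℝ) := by exact_mod_cast hn
  have hn1R : (n : ℝ) - 1 ≠ 0 := by linarith
  have hKR : (K : ℝ) ≠ 0 := Nat.cast_ne_zero.2 Fintype.card_ne_zero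
  have hCR : (C : ℝ) ≠ 0 := Nat.cast_ne_zero.2 Fintype.card_ne_zero
  -- translate away the base point
  have hstep1 : uRg2 (fun p : Fin (n - 1) × (Fin e' → Equiv.Perm (Fin n)) =>
      xpos X' tl w p.2 i p.1) = uRg2 (fun p : Fin (n - 1) × (Fin e' → Equiv.Perm (Fin n)) =>
      S p.1 (p.2 i)) := by
    have h : (fun p : Fin (n - 1) × (Fin e' → Equiv.Perm (Fin n)) => xpos X' tl w p.2 i p.1)
        = fun p : Fin (n - 1) × (Fin e' → Equiv.Perm (Fin n)) =>
            X' (tl i) + S p.1 (p.2 i) := rfl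
    rw [h, uRg2_translate]
  rw [hstep1, uRg2_eq]
  -- cardinality of the index type
  have hcard : (Fintype.card (Fin (n - 1) × (Fin e' → Equiv.Perm (Fin n))) : ℝ)
      = ((n : ℝ) - 1) * ((K : ℝ) * (C : ℝ)) := by
    rw [Fintype.card_prod, Fintype.card_fin, card_funPerm i, ← hK, ← hC]
    push_cast [Nat.cast_sub (by omega : 1 ≤ n)]
    ring
  -- scalar sums over j
  have hsum1 : ∑ j : Fin (n - 1), (((j : ℕ) : ℝ) + 1) = ((n : ℝ) - 1) * (n : ℝ) / 2 := by
    rw [Fin.sum_univ_eq_sum_range (fun j => ((j : ℝ) + 1)) (n - 1), sum_range_cast_add_one,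
      Nat.cast_sub (by omega : 1 ≤ n), Nat.cast_one]
    ring
  have hsum2 : ∑ j : Fin (n - 1), (((j : ℕ) : ℝ) + 1) * ((j : ℕ) : ℝ)
      = ((n : ℝ) - 2) * ((n : ℝ) - 1) * (n : ℝ) / 3 := by
    rw [Fin.sum_univ_eq_sum_range (fun j => ((j : ℝ) + 1) * (j : ℝ)) (n - 1),
      sum_range_cast_mul, Nat.cast_sub (by omega : 1 ≤ n), Nat.cast_one]
    ring
  -- per-edge filter cardinality
  have hjlt : ∀ j : Fin (n - 1), (j : ℕ) < n := fun j => j.isLt.trans_le (Nat.sub_le n 1)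
  -- mean of S over one permutation coordinate
  have hvec : ∀ k : Fin n, ∑ π : Equiv.Perm (Fin n), ω (π k) = ((K : ℝ) / n) • Wv := by
    intro k
    rw [sum_perm_vec (by omega : 0 < n) ω k, ← hWvdef, ← hK]
  have hSπ : ∀ j : Fin (n - 1), ∑ π : Equiv.Perm (Fin n), S j π
      = (((j : ℕ) : ℝ) + 1) • (((K : ℝ) / n) • Wv) := by
    intro j
    simp only [hSdef]
    rw [Finset.sum_comm]
    have h1 : ∀ k : Fin n, (∑ π : Equiv.Perm (Fin n),
        if (k : ℕ) ≤ (j : ℕ) then ω (π k) else 0)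
        = if (k : ℕ) ≤ (j : ℕ) then ((K : ℝ) / n) • Wv else 0 := by
      intro k
      by_cases h : (k : ℕ) ≤ (j : ℕ)
      · simp only [if_pos h]; exact hvec k
      · simp [h]
    rw [Finset.sum_congr rfl fun k _ => h1 k, ← Finset.sum_filter, Finset.sum_const,
      card_filter_le (j : ℕ) (hjlt j), ← Nat.cast_smul_eq_nsmul ℝ]
    push_cast
    ring_nf
  have hMean : ∑ q : Fin (n - 1) × Equiv.Perm (Fin n), S q.1 q.2
      = (((n : ℝ) - 1) * (n : ℝ) / 2 * ((K : ℝ) / n)) • Wv := by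
    rw [Fintype.sum_prod_type, Finset.sum_congr rfl fun j _ => hSπ j, ← Finset.sum_smul,
      hsum1, smul_smul]
  -- pair sums
  set A : ℝ := (K : ℝ) / n * P2 with hAdef
  set B : ℝ := (K : ℝ) / ((n : ℝ) * ((n : ℝ) - 1)) * (‖Wv‖ ^ 2 - P2) with hBdef
  have hA : ∀ k : Fin n, ∑ π : Equiv.Perm (Fin n), ⟪ω (π k), ω (π k)⟫ = A := by
    intro k
    simp only [real_inner_self_eq_norm_sq]
    rw [sum_perm_diag (by omega : 0 < n) ω k, ← hP2, ← hK, hAdef]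
  have hB : ∀ k l : Fin n, k ≠ l →
      ∑ π : Equiv.Perm (Fin n), ⟪ω (π k), ω (π l)⟫ = B := by
    intro k l hkl
    rw [sum_perm_offdiag hn ω hkl, ← hP2, ← hWvdef, ← hK, hBdef]
  have hSq : ∀ j : Fin (n - 1), ∑ π : Equiv.Perm (Fin n), ‖S j π‖ ^ 2
      = (((j : ℕ) : ℝ) + 1) * A + (((j : ℕ) : ℝ) + 1) * ((j : ℕ) : ℝ) * B := by
    intro j
    have hexp : ∀ π : Equiv.Perm (Fin n), ‖S j π‖ ^ 2
        = ∑ k : Fin n, ∑ l : Fin n, (if (k : ℕ) ≤ (j : ℕ) then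
            (if (l : ℕ) ≤ (j : ℕ) then ⟪ω (π k), ω (π l)⟫ else 0) else 0) := by
      intro π
      rw [← real_inner_self_eq_norm_sq]
      simp only [hSdef]
      rw [sum_inner]
      refine Finset.sum_congr rfl fun k _ => ?_
      rw [inner_sum]
      refine Finset.sum_congr rfl fun l _ => ?_
      split_ifs <;> simp
    rw [Finset.sum_congr rfl fun π _ => hexp π, Finset.sum_comm,
      Finset.sum_congr rfl fun k _ => Finset.sum_comm]
    have hpt : ∀ k l : Fin n, (∑ π : Equiv.Perm (Fin n), if (k : ℕ) ≤ (j : ℕ) then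
          (if (l : ℕ) ≤ (j : ℕ) then ⟪ω (π k), ω (π l)⟫ else 0) else 0)
        = if (k : ℕ) ≤ (j : ℕ) then
            (if (l : ℕ) ≤ (j : ℕ) then (if k = l then A else B) else 0) else 0 := by
      intro k l
      by_cases h1 : (k : ℕ) ≤ (j : ℕ)
      · by_cases h2 : (l : ℕ) ≤ (j : ℕ)
        · simp only [if_pos h1, if_pos h2]
          by_cases h3 : k = l
          · subst h3; rw [if_pos rfl]; exact hA k
          · rw [if_neg h3]; exact hB k l h3
        · simp [h1, h2]
      · simp [h1]
    rw [Finset.sum_congr rfl fun k _ => Finset.sum_congr rfl fun l _ => hpt k l]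
    have hFcard : (Finset.univ.filter fun k : Fin n => (k : ℕ) ≤ (j : ℕ)).card = (j : ℕ) + 1 :=
      card_filter_le _ (hjlt j)
    set F := Finset.univ.filter fun k : Fin n => (k : ℕ) ≤ (j : ℕ) with hF
    have hk1 : ∀ k : Fin n, (∑ l : Fin n, if (k : ℕ) ≤ (j : ℕ) then
          (if (l : ℕ) ≤ (j : ℕ) then (if k = l then A else B) else 0) else 0)
        = if (k : ℕ) ≤ (j : ℕ) then (∑ l ∈ F, if k = l then A else B) else 0 := by
      intro k
      by_cases h : (k : ℕ) ≤ (j : ℕ)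
      · simp only [if_pos h]
        exact (Finset.sum_filter _ _).symm
      · simp [h]
    rw [Finset.sum_congr rfl fun k _ => hk1 k, ← Finset.sum_filter]
    have hinner : ∀ k ∈ F, (∑ l ∈ F, if k = l then A else B)
        = A + ((j : ℕ) : ℝ) * B := by
      intro k hk
      rw [← Finset.add_sum_erase F _ hk, if_pos rfl]
      congr 1
      have h5 : ∀ l ∈ F.erase k, (if k = l then A else B) = B :=
        fun l hl => if_neg fun h => (Finset.ne_of_mem_erase hl) h.symm
      rw [Finset.sum_congr rfl h5, Finset.sum_const, Finset.card_erase_of_mem hk, hFcard,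
        Nat.add_sub_cancel, nsmul_eq_mul]
    rw [Finset.sum_congr rfl hinner, Finset.sum_const, hFcard, nsmul_eq_mul]
    push_cast
    ring
  have hSigma1 : ∑ q : Fin (n - 1) × Equiv.Perm (Fin n), ‖S q.1 q.2‖ ^ 2
      = ((n : ℝ) - 1) * (n : ℝ) / 2 * A
        + ((n : ℝ) - 2) * ((n : ℝ) - 1) * (n : ℝ) / 3 * B := by
    rw [Fintype.sum_prod_type, Finset.sum_congr rfl fun j _ => hSq j,
      Finset.sum_add_distrib, ← Finset.sum_mul, ← Finset.sum_mul, hsum1, hsum2]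
  -- reduce the big sums to sums over a single permutation
  have e1 : ∑ p : Fin (n - 1) × (Fin e' → Equiv.Perm (Fin n)), ‖S p.1 (p.2 i)‖ ^ 2
      = C • ∑ q : Fin (n - 1) × Equiv.Perm (Fin n), ‖S q.1 q.2‖ ^ 2 :=
    sum_eval i (fun q => ‖S q.1 q.2‖ ^ 2)
  have e2 : (∑ p : Fin (n - 1) × (Fin e' → Equiv.Perm (Fin n)), S p.1 (p.2 i))
      = C • ∑ q : Fin (n - 1) × Equiv.Perm (Fin n), S q.1 q.2 :=
    sum_eval i (fun q => S q.1 q.2)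
  have hMu : uMu (fun p : Fin (n - 1) × (Fin e' → Equiv.Perm (Fin n)) => S p.1 (p.2 i))
      = (2 : ℝ)⁻¹ • Wv := by
    unfold uMu
    rw [e2, hMean, ← Nat.cast_smul_eq_nsmul ℝ, smul_smul, smul_smul, hcard]
    congr 1
    field_simp
  have hMuNorm : ‖(2 : ℝ)⁻¹ • Wv‖ ^ 2 = 4⁻¹ * ‖Wv‖ ^ 2 := by
    rw [norm_smul, mul_pow, norm_inv, Real.norm_ofNat]
    norm_num
  have hURg : uRg2 ω = (n : ℝ)⁻¹ * P2 - ((n : ℝ)⁻¹) ^ 2 * ‖Wv‖ ^ 2 := by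
    haveI : Nonempty (Fin n) := ⟨⟨0, by omega⟩⟩
    rw [uRg2_eq, Fintype.card_fin, ← hP2]
    have hμ : uMu ω = (n : ℝ)⁻¹ • Wv := by
      unfold uMu
      rw [Fintype.card_fin, ← hWvdef]
    rw [hμ, norm_smul, mul_pow, norm_inv, Real.norm_natCast]
  rw [e1, hMu, hMuNorm, ← Nat.cast_smul_eq_nsmul ℝ, smul_eq_mul, hSigma1, hcard, hURg,
    hAdef, hBdef]
  field_simp
  ring
end

section
/- Let G' be a directed graph with vertices indexed by Fin v' and edges indexed by Fin e' (e' ≥ 1), with maps head, tail : Fin e' → Fin v' (loops and multiple edges allowed), and let X' : Fin v' → ℝ^d be an embedding. Let M' be the point cloud of edge midpoints m'_i = (X'(head i) + X'(tail i))/2, i ∈ Fin e', with unit weights, let w'_i = X'(head i) − X'(tail i), and suppose every vertex degree deg(k) = #{i : head i = k} + #{i : tail i = k} is positive. Then Rg²(M') = Rg²(X', deg) − (1/(4e')) Σ_{i=1}^{e'} ‖w'_i‖², where Rg²(X', deg) is the degree-weighted squared radius of gyration of X'. -/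
open Finset

open Finset

lemma fiber_sum {α β M : Type*} [Fintype α] [Fintype β] [DecidableEq β] [AddCommMonoid M]
    (f : α → β) (g : β → M) :
    ∑ i, g (f i) = ∑ k, (univ.filter fun i => f i = k).card • g k := by
  rw [← Finset.sum_fiberwise univ f (fun i => g (f i))]
  refine Finset.sum_congr rfl fun k _ => ?_
  rw [Finset.sum_congr rfl (fun i hi => by rw [(Finset.mem_filter.mp hi).2]), Finset.sum_const]

/-- The squared radius of gyration of the edge-midpoint cloud `M'` equals the
degree-weighted squared radius of gyration of the vertex positions minus
`(1/(4e')) Σᵢ ‖w'ᵢ‖²`, where `w'ᵢ = X'(head i) − X'(tail i)` and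
`deg(k) = #{i : head i = k} + #{i : tail i = k}`. -/
theorem midpoint_cloud_rg2 {d v' e' : ℕ} (he' : 1 ≤ e')
    (head tl : Fin e' → Fin v')
    (X' : Fin v' → EuclideanSpace ℝ (Fin d))
    (hdeg : ∀ k : Fin v',
      0 < (univ.filter fun i => head i = k).card + (univ.filter fun i => tl i = k).card) :
    uRg2 (fun i : Fin e' => (2 : ℝ)⁻¹ • (X' (head i) + X' (tl i)))
      = rg2 X' (fun k =>
          (((univ.filter fun i => head i = k).card : ℝ)
            + ((univ.filter fun i => tl i = k).card : ℝ)))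
        - (1 / (4 * (e' : ℝ))) * ∑ i : Fin e', ‖X' (head i) - X' (tl i)‖ ^ 2 := by
  have hE : (0:ℝ) < (e' : ℝ) := by exact_mod_cast he'
  set A : Fin v' → ℕ := fun k => (univ.filter fun i => head i = k).card with hA
  set B : Fin v' → ℕ := fun k => (univ.filter fun i => tl i = k).card with hB
  -- sums of fibers
  have hsumA : ∑ k, (A k : ℝ) = (e' : ℝ) := by
    have := fiber_sum head (fun _ => (1:ℝ))
    simpa [A, Finset.card_univ] using this.symm
  have hsumB : ∑ k, (B k : ℝ) = (e' : ℝ) := by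
    have := fiber_sum tl (fun _ => (1:ℝ))
    simpa [B, Finset.card_univ] using this.symm
  have hdegsum : ∑ k, ((A k : ℝ) + (B k : ℝ)) = 2 * (e' : ℝ) := by
    rw [Finset.sum_add_distrib, hsumA, hsumB]; ring
  have fibA : ∀ (g : Fin v' → ℝ), ∑ i, g (head i) = ∑ k, (A k : ℝ) * g k := by
    intro g
    rw [fiber_sum head g]
    exact Finset.sum_congr rfl fun k _ => by rw [nsmul_eq_mul]
  have fibB : ∀ (g : Fin v' → ℝ), ∑ i, g (tl i) = ∑ k, (B k : ℝ) * g k := by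
    intro g
    rw [fiber_sum tl g]
    exact Finset.sum_congr rfl fun k _ => by rw [nsmul_eq_mul]
  have fibAv : ∑ i, X' (head i) = ∑ k, (A k : ℝ) • X' k := by
    rw [fiber_sum head X']
    exact Finset.sum_congr rfl fun k _ => (Nat.cast_smul_eq_nsmul ℝ _ _).symm
  have fibBv : ∑ i, X' (tl i) = ∑ k, (B k : ℝ) • X' k := by
    rw [fiber_sum tl X']
    exact Finset.sum_congr rfl fun k _ => (Nat.cast_smul_eq_nsmul ℝ _ _).symm
  set μ := com X' (fun k => ((A k : ℝ) + (B k : ℝ))) with hμ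
  -- center equality
  have hcenter : uMu (fun i : Fin e' => (2 : ℝ)⁻¹ • (X' (head i) + X' (tl i))) = μ := by
    rw [hμ, uMu, com, hdegsum]
    have : ∑ k, ((A k : ℝ) + (B k : ℝ)) • X' k
        = ∑ i, X' (head i) + ∑ i, X' (tl i) := by
      rw [fibAv, fibBv, ← Finset.sum_add_distrib]
      exact Finset.sum_congr rfl fun k _ => by rw [add_smul]
    rw [this, ← Finset.smul_sum, Finset.sum_add_distrib, smul_smul, Fintype.card_fin]
    congr 1
    rw [mul_inv]
    ring
  -- pointwise identity
  have hpt : ∀ i : Fin e',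
      ‖(2 : ℝ)⁻¹ • (X' (head i) + X' (tl i)) - μ‖ ^ 2
        = (‖X' (head i) - μ‖ ^ 2 + ‖X' (tl i) - μ‖ ^ 2) / 2
          - ‖X' (head i) - X' (tl i)‖ ^ 2 / 4 := by
    intro i
    set a := X' (head i) - μ
    set b := X' (tl i) - μ
    have h1 : (2 : ℝ)⁻¹ • (X' (head i) + X' (tl i)) - μ = (2 : ℝ)⁻¹ • (a + b) := by
      simp only [a, b]; module
    have h2 : X' (head i) - X' (tl i) = a - b := by simp only [a, b]; abel
    rw [h1, h2, norm_smul]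
    have hpar := parallelogram_law_with_norm ℝ a b
    have hn : ‖(2:ℝ)⁻¹‖ = (2:ℝ)⁻¹ := by norm_num
    rw [hn]
    nlinarith [hpar, norm_nonneg (a+b), norm_nonneg (a-b)]
  -- assemble
  rw [uRg2, rg2, hcenter, Fintype.card_fin, ← hμ]
  have hsum : ∑ i : Fin e', ‖(2 : ℝ)⁻¹ • (X' (head i) + X' (tl i)) - μ‖ ^ 2
      = (∑ k, ((A k : ℝ) + (B k : ℝ)) * ‖X' k - μ‖ ^ 2) / 2
        - (∑ i : Fin e', ‖X' (head i) - X' (tl i)‖ ^ 2) / 4 := by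
    rw [Finset.sum_congr rfl fun i _ => hpt i, Finset.sum_sub_distrib, ← Finset.sum_div,
      ← Finset.sum_div, Finset.sum_add_distrib,
      fibA (fun k => ‖X' k - μ‖ ^ 2), fibB (fun k => ‖X' k - μ‖ ^ 2)]
    congr 1
    rw [← Finset.sum_add_distrib]
    congr 1
    exact Finset.sum_congr rfl fun k _ => by ring
  rw [hsum, hdegsum]
  field_simp
  ring
end

section
/- Let w_1,…,w_n ∈ ℝ^d and a ∈ ℝ^d. For a permutation σ of {1,…,n}, let X^σ be the point cloud of the n+1 path positions x^σ_0 = a and x^σ_j = a + Σ_{k=1}^j w_{σ(k)} for j ∈ {1,…,n}, with unit weights. Then the average over all σ ∈ S_n satisfies (1/n!) Σ_{σ∈S_n} Rg²(X^σ) = ((n+2)/(12(n+1)))·(Σ_{k=1}^n ‖w_k‖² + ‖Σ_{k=1}^n w_k‖²). -/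
open Finset
open scoped RealInnerProductSpace

theorem Finset.sum_sum_mul_ite_eq {ι : Type*} [Fintype ι] [DecidableEq ι] (S : ι → ι → ℝ)
    (c₀ c₁ : ℝ) :
    ∑ k, ∑ l, S k l * (if k = l then c₀ else c₁)
      = c₁ * ∑ k, ∑ l, S k l + (c₀ - c₁) * ∑ k, S k k := by
  have h : ∀ k l, S k l * (if k = l then c₀ else c₁)
      = c₁ * S k l + if k = l then (c₀ - c₁) * S k l else 0 := by
    intro k l
    split_ifs <;> ring
  simp only [h, sum_add_distrib, sum_ite_eq, mem_univ, if_true, mul_sum]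

namespace Equiv.Perm

variable {ι : Type*} [Fintype ι] [DecidableEq ι]

theorem sum_apply_apply_mul_right (F : ι → ι → ℝ) (τ : Perm ι) (k l : ι) :
    ∑ σ : Perm ι, F (σ (τ k)) (σ (τ l)) = ∑ σ : Perm ι, F (σ k) (σ l) :=
  Equiv.sum_comp (Equiv.mulRight τ) fun σ => F (σ k) (σ l)

theorem sum_apply_apply_diag_eq (F : ι → ι → ℝ) (k k' : ι) :
    ∑ σ : Perm ι, F (σ k) (σ k) = ∑ σ : Perm ι, F (σ k') (σ k') := by
  obtain ⟨τ, rfl⟩ := MulAction.exists_smul_eq (Perm ι) k' k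
  exact sum_apply_apply_mul_right F τ k' k'

theorem sum_apply_apply_offDiag_eq (F : ι → ι → ℝ) {k l k' l' : ι} (h : k ≠ l)
    (h' : k' ≠ l') :
    ∑ σ : Perm ι, F (σ k) (σ l) = ∑ σ : Perm ι, F (σ k') (σ l') := by
  obtain ⟨τ, rfl, rfl⟩ :=
    MulAction.is_two_pretransitive_iff.mp (isMultiplyPretransitive ι 2) h' h
  exact sum_apply_apply_mul_right F τ k' l'

theorem exists_sum_apply_apply_eq_ite (F : ι → ι → ℝ) : ∃ c₀ c₁ : ℝ,
    ∀ k l, ∑ σ : Perm ι, F (σ k) (σ l) = if k = l then c₀ else c₁ := by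
  have hdiag : ∃ c₀, ∀ k, ∑ σ : Perm ι, F (σ k) (σ k) = c₀ := by
    rcases isEmpty_or_nonempty ι with hι | ⟨⟨k₀⟩⟩
    · exact ⟨0, hι.elim⟩
    · exact ⟨_, fun k => sum_apply_apply_diag_eq F k k₀⟩
  have hoff : ∃ c₁, ∀ k l, k ≠ l → ∑ σ : Perm ι, F (σ k) (σ l) = c₁ := by
    by_cases hι : ∃ k₀ l₀ : ι, k₀ ≠ l₀
    · obtain ⟨k₀, l₀, h₀⟩ := hι
      exact ⟨_, fun k l h => sum_apply_apply_offDiag_eq F h h₀⟩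
    · push Not at hι
      exact ⟨0, fun k l h => absurd (hι k l) h⟩
  obtain ⟨c₀, hc₀⟩ := hdiag
  obtain ⟨c₁, hc₁⟩ := hoff
  refine ⟨c₀, c₁, fun k l => ?_⟩
  split_ifs with h
  · exact h ▸ hc₀ k
  · exact hc₁ k l h


/-- `p` and `q` stand for `tr S / card ι` and `(∑ S - tr S) / (card ι * (card ι - 1))`;
prescribing them multiplied out avoids dividing by zero when `card ι ≤ 1`. -/
theorem sum_sum_sum_mul_apply_apply (S F : ι → ι → ℝ) {p q : ℝ}
    (hdiag : ∑ k, S k k = Fintype.card ι * p)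
    (hoff : ∑ k, ∑ l, S k l - ∑ k, S k k = Fintype.card ι * (Fintype.card ι - 1) * q) :
    ∑ σ : Perm ι, ∑ k, ∑ l, S k l * F (σ k) (σ l)
      = (Fintype.card ι).factorial * (p * ∑ k, F k k + q * (∑ k, ∑ l, F k l - ∑ k, F k k)) := by
  obtain ⟨c₀, c₁, hc⟩ := exists_sum_apply_apply_eq_ite F
  have hsum : ∀ G : ι → ι → ℝ, ∑ σ : Perm ι, ∑ k, ∑ l, G k l * F (σ k) (σ l)
      = c₁ * ∑ k, ∑ l, G k l + (c₀ - c₁) * ∑ k, G k k := by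
    intro G
    rw [← sum_sum_mul_ite_eq]
    simp only [← hc, mul_sum]
    rw [sum_comm]
    exact sum_congr rfl fun k _ => sum_comm
  have htr : (Fintype.card ι).factorial * ∑ k, F k k = c₀ * Fintype.card ι := by
    calc (Fintype.card ι).factorial * ∑ k, F k k
        = ∑ σ : Perm ι, ∑ k, F (σ k) (σ k) := by
          simp [Equiv.sum_comp _ fun k => F k k, Fintype.card_perm]
      _ = c₀ * Fintype.card ι := by
          rw [sum_comm]; simp [hc, mul_comm]
  have htot : (Fintype.card ι).factorial * ∑ k, ∑ l, F k l
      = c₁ * (Fintype.card ι * Fintype.card ι) + (c₀ - c₁) * Fintype.card ι := by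
    calc (Fintype.card ι).factorial * ∑ k, ∑ l, F k l
        = ∑ σ : Perm ι, ∑ k, ∑ l, 1 * F (σ k) (σ l) := by
          have hσ : ∀ σ : Perm ι, ∑ k, ∑ l, F (σ k) (σ l) = ∑ k, ∑ l, F k l := fun σ => by
            rw [← Equiv.sum_comp σ fun k => ∑ l, F k l]
            exact sum_congr rfl fun k _ => Equiv.sum_comp σ (F (σ k))
          simp [hσ, Fintype.card_perm]
      _ = _ := by rw [hsum]; simp
  rw [hsum S]
  linear_combination c₁ * hoff + c₀ * hdiag - p * htr - q * (htot - htr)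

end Equiv.Perm

section UnitWeights

variable {V : Type*} [Fintype V]

noncomputable def uMean (f : V → ℝ) : ℝ :=
  (Fintype.card V : ℝ)⁻¹ * ∑ v, f v

noncomputable def uCov (f g : V → ℝ) : ℝ :=
  uMean (fun v => f v * g v) - uMean f * uMean g

theorem uMean_sum {ι : Type*} [Fintype ι] (f : ι → V → ℝ) :
    uMean (fun v => ∑ i, f i v) = ∑ i, uMean (f i) := by
  simp only [uMean, sum_comm (γ := ι), mul_sum]

theorem uMean_mul_const (f : V → ℝ) (r : ℝ) : uMean (fun v => f v * r) = uMean f * r := by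
  simp only [uMean, ← sum_mul, mul_assoc]

theorem sum_sum_uCov {ι κ : Type*} [Fintype ι] [Fintype κ] (f : ι → V → ℝ) (g : κ → V → ℝ) :
    ∑ i, ∑ j, uCov (f i) (g j) = uCov (∑ i, f i) (∑ j, g j) := by
  simp only [uCov, Finset.sum_fn, sum_mul_sum, uMean_sum, sum_sub_distrib]

variable {d : ℕ}

theorem uMu_const_add [Nonempty V] (a : EuclideanSpace ℝ (Fin d))
    (X : V → EuclideanSpace ℝ (Fin d)) :
    uMu (fun v => a + X v) = a + uMu X := by
  rw [uMu, uMu, sum_add_distrib, sum_const, card_univ, smul_add, ← Nat.cast_smul_eq_nsmul ℝ,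
    smul_smul, inv_mul_cancel₀ (by positivity), one_smul]

theorem uRg2_const_add [Nonempty V] (a : EuclideanSpace ℝ (Fin d))
    (X : V → EuclideanSpace ℝ (Fin d)) :
    uRg2 (fun v => a + X v) = uRg2 X := by
  simp only [uRg2, uMu_const_add, add_sub_add_left_eq_sub]

theorem uRg2_eq_uMean_sub [Nonempty V] (X : V → EuclideanSpace ℝ (Fin d)) :
    uRg2 X = uMean (fun v => ‖X v‖ ^ 2) - ‖uMu X‖ ^ 2 := by
  have hN : (Fintype.card V : ℝ) ≠ 0 := by positivity
  have hsum : ∑ v, X v = (Fintype.card V : ℝ) • uMu X := by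
    rw [uMu, smul_smul, mul_inv_cancel₀ hN, one_smul]
  have hexpand : ∑ v, ‖X v - uMu X‖ ^ 2
      = ∑ v, ‖X v‖ ^ 2 - Fintype.card V * ‖uMu X‖ ^ 2 := by
    simp only [norm_sub_sq_real, sum_add_distrib, sum_sub_distrib, ← mul_sum, ← sum_inner, hsum,
      real_inner_smul_left, real_inner_self_eq_norm_sq, sum_const, card_univ, nsmul_eq_mul]
    ring
  rw [uRg2, uMean, hexpand]
  field_simp

theorem norm_sum_smul_sq {E ι : Type*} [NormedAddCommGroup E] [InnerProductSpace ℝ E] [Fintype ι]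
    (c : ι → ℝ) (u : ι → E) :
    ‖∑ i, c i • u i‖ ^ 2 = ∑ i, ∑ j, c i * c j * ⟪u i, u j⟫ := by
  simp only [← real_inner_self_eq_norm_sq, sum_inner, inner_sum, real_inner_smul_left,
    real_inner_smul_right]
  refine sum_congr rfl fun i _ => sum_congr rfl fun j _ => by rw [real_inner_comm]; ring

theorem uRg2_sum_smul {ι : Type*} [Fintype ι] [Nonempty V] (c : ι → V → ℝ)
    (u : ι → EuclideanSpace ℝ (Fin d)) :
    uRg2 (fun v => ∑ i, c i v • u i) = ∑ i, ∑ j, uCov (c i) (c j) * ⟪u i, u j⟫ := by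
  have hmu : uMu (fun v => ∑ i, c i v • u i) = ∑ i, uMean (c i) • u i := by
    simp only [uMu, uMean, sum_comm (γ := ι), smul_sum, mul_smul, sum_smul]
  rw [uRg2_eq_uMean_sub, hmu, norm_sum_smul_sq]
  simp only [norm_sum_smul_sq, uMean_sum, uMean_mul_const, uCov, sub_mul, sum_sub_distrib]

end UnitWeights

theorem Fin.sum_natCast (m : ℕ) : ∑ i : Fin m, ((i : ℕ) : ℝ) = m * (m - 1) / 2 := by
  induction m with
  | zero => simp
  | succ m ih =>
    rw [Fin.sum_univ_castSucc]
    simp only [Fin.val_castSucc, Fin.val_last, ih]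
    push_cast
    ring

theorem Fin.sum_natCast_sq (m : ℕ) :
    ∑ i : Fin m, ((i : ℕ) : ℝ) ^ 2 = m * (m - 1) * (2 * m - 1) / 6 := by
  induction m with
  | zero => simp
  | succ m ih =>
    rw [Fin.sum_univ_castSucc]
    simp only [Fin.val_castSucc, Fin.val_last, ih]
    push_cast
    ring

section StepIndicator

variable {n : ℕ}

def stepIndicator (k : Fin n) (j : Fin (n + 1)) : ℝ :=
  if (k : ℕ) < j then 1 else 0

theorem sum_stepIndicator_left (j : Fin (n + 1)) : ∑ k : Fin n, stepIndicator k j = j := by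
  simp only [stepIndicator]
  rw [sum_boole, Fin.card_filter_val_lt, min_eq_right (Nat.lt_succ_iff.mp j.isLt)]

theorem uMean_stepIndicator (k : Fin n) : uMean (stepIndicator k) = (n - k) / (n + 1) := by
  have hlt : ∀ j : Fin (n + 1), (k : ℕ) < j ↔ k.castSucc < j := fun j => Iff.rfl
  simp only [uMean, stepIndicator, hlt, sum_boole, filter_lt_eq_Ioi, Fin.card_Ioi,
    Fin.val_castSucc, Fintype.card_fin]
  rw [Nat.add_sub_cancel, Nat.cast_sub k.isLt.le]
  push_cast
  ring

theorem uCov_stepIndicator_self (k : Fin n) :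
    uCov (stepIndicator k) (stepIndicator k) = (n - k) / (n + 1) - ((n - k) / (n + 1)) ^ 2 := by
  have hidem : (fun j => stepIndicator k j * stepIndicator k j) = stepIndicator k := by
    ext j; unfold stepIndicator; split_ifs <;> norm_num
  rw [uCov, hidem, uMean_stepIndicator, sq]

theorem sum_uCov_stepIndicator_self :
    ∑ k : Fin n, uCov (stepIndicator k) (stepIndicator k) = n * ((n + 2) / (6 * (n + 1))) := by
  have hN : (n : ℝ) + 1 ≠ 0 := by positivity
  calc ∑ k : Fin n, uCov (stepIndicator k) (stepIndicator k)
      = ∑ k : Fin n, (n + (n - 1) * (k : ℝ) - (k : ℝ) ^ 2) / (n + 1) ^ 2 := by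
        refine sum_congr rfl fun k _ => ?_
        rw [uCov_stepIndicator_self]
        field_simp
        ring
    _ = (n * n + (n - 1) * ∑ k : Fin n, (k : ℝ) - ∑ k : Fin n, (k : ℝ) ^ 2) / (n + 1) ^ 2 := by
        rw [← sum_div, sum_sub_distrib, sum_add_distrib, ← mul_sum, sum_const, card_univ,
          Fintype.card_fin, nsmul_eq_mul]
    _ = n * ((n + 2) / (6 * (n + 1))) := by
        rw [Fin.sum_natCast, Fin.sum_natCast_sq]
        field_simp
        ring

theorem sum_sum_uCov_stepIndicator :
    ∑ k : Fin n, ∑ l : Fin n, uCov (stepIndicator k) (stepIndicator l) = n * (n + 2) / 12 := by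
  have hN : (n : ℝ) + 1 ≠ 0 := by positivity
  rw [sum_sum_uCov, sum_fn]
  simp only [sum_stepIndicator_left, uCov, uMean, Fintype.card_fin, Fin.sum_natCast, ← sq,
    Fin.sum_natCast_sq]
  push_cast
  field_simp
  ring

end StepIndicator

theorem average_rg2_random_path_general {d n : ℕ}
    (w : Fin n → EuclideanSpace ℝ (Fin d)) (a : EuclideanSpace ℝ (Fin d)) :
    (Nat.factorial n : ℝ)⁻¹ *
        ∑ σ : Equiv.Perm (Fin n),
          uRg2 (fun j : Fin (n + 1) =>
            a + ∑ k : Fin n, if (k : ℕ) < (j : ℕ) then w (σ k) else 0)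
      = (((n : ℝ) + 2) / (12 * ((n : ℝ) + 1))) *
          ((∑ k : Fin n, ‖w k‖ ^ 2) + ‖∑ k : Fin n, w k‖ ^ 2) := by
  have hpath : ∀ σ : Equiv.Perm (Fin n),
      uRg2 (fun j : Fin (n + 1) => a + ∑ k : Fin n, if (k : ℕ) < (j : ℕ) then w (σ k) else 0)
        = ∑ k, ∑ l, uCov (stepIndicator k) (stepIndicator l) * ⟪w (σ k), w (σ l)⟫ := fun σ => by
    rw [uRg2_const_add, ← uRg2_sum_smul]
    simp only [stepIndicator, ite_smul, one_smul, zero_smul]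
  have hdiag : ∑ k : Fin n, uCov (stepIndicator k) (stepIndicator k)
      = Fintype.card (Fin n) * ((n + 2) / (6 * (n + 1))) := by
    rw [Fintype.card_fin, sum_uCov_stepIndicator_self]
  have hoff : ∑ k : Fin n, ∑ l : Fin n, uCov (stepIndicator k) (stepIndicator l)
        - ∑ k : Fin n, uCov (stepIndicator k) (stepIndicator k)
      = Fintype.card (Fin n) * (Fintype.card (Fin n) - 1) * ((n + 2) / (12 * (n + 1))) := by
    rw [Fintype.card_fin, sum_sum_uCov_stepIndicator, sum_uCov_stepIndicator_self]
    field_simp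
    ring
  have hnorm : ∑ k, ∑ l, ⟪w k, w l⟫ = ‖∑ k, w k‖ ^ 2 := by
    rw [← real_inner_self_eq_norm_sq, sum_inner]
    simp only [inner_sum]
  simp only [hpath]
  rw [Equiv.Perm.sum_sum_sum_mul_apply_apply _ (fun p q => ⟪w p, w q⟫) hdiag hoff, hnorm,
    Fintype.card_fin]
  simp only [real_inner_self_eq_norm_sq]
  field_simp
  ring

/-- Average squared radius of gyration of a random permuted path: for displacement
vectors `w₁,…,w_n` and start point `a`, with path positions
`x^σ_j = a + Σ_{k=1}^j w_{σ(k)}` for `j = 0,…,n` (unit weights),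
`(1/n!) Σ_{σ∈S_n} Rg²(X^σ) = ((n+2)/(12(n+1)))·(Σ_k ‖w_k‖² + ‖Σ_k w_k‖²)`. -/
theorem average_rg2_random_path {d n : ℕ} (hd : 1 ≤ d) (hn : 1 ≤ n)
    (w : Fin n → EuclideanSpace ℝ (Fin d)) (a : EuclideanSpace ℝ (Fin d)) :
    (Nat.factorial n : ℝ)⁻¹ *
        ∑ σ : Equiv.Perm (Fin n),
          uRg2 (fun j : Fin (n + 1) =>
            a + ∑ k : Fin n, if (k : ℕ) < (j : ℕ) then w (σ k) else 0)
      = (((n : ℝ) + 2) / (12 * ((n : ℝ) + 1))) *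
          ((∑ k : Fin n, ‖w k‖ ^ 2) + ‖∑ k : Fin n, w k‖ ^ 2) :=
  average_rg2_random_path_general w a
end
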